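/- arXiv:2107.08276 — 7 statements merged into one kernel-verified Lean document; each statement's English description precedes it below -/
import Mathlib

section
/- Let M, A ∈ ℕ with M ≥ 3 and 1 < A < M. Then for any function F : 𝔄(M,A) → ℂ with ‖F‖_Lip > 0 and any t > 0, μ({𝒜 ∈ 𝔄(M,A) : |F(𝒜) − 𝔼(F)| ≥ t}) ≤ 2·exp(−t²/(16·A·‖F‖²_Lip)), where 𝔼(F) is the expectation of F with respect to μ. -/
open scoped BigOperators

/-- The discrete Fourier transform matrix `F_N`,
with entries `(F_N)_{j l} = N^{-1/2} e^{-2π i j l / N}`. -/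
noncomputable def dftMatrix (N : ℕ) : Matrix (Fin N) (Fin N) ℂ :=
  fun j l => (1 / Real.sqrt N : ℝ) *
    Complex.exp (-(2 * Real.pi * Complex.I * (j : ℕ) * (l : ℕ)) / N)

/-- The discrete Cantor set `C_k(M, 𝒜) = {∑ a_j M^j : a_j ∈ 𝒜}` as a finset of naturals. -/
def discCantor (M k : ℕ) (A : Finset ℕ) : Finset ℕ :=
  (Fintype.piFinset (fun _ : Fin k => A)).image (fun a => ∑ i : Fin k, a i * M ^ (i : ℕ))

/-- The matrix of the operator `1_{C_k(M,𝒜)} F_N 1_{C_k(M,𝒜)}` on `ℓ²_N`, where `N = M^k`. -/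
noncomputable def cantorOp (M k : ℕ) (A : Finset ℕ) :
    Matrix (Fin (M ^ k)) (Fin (M ^ k)) ℂ :=
  fun j l => if (j : ℕ) ∈ discCantor M k A ∧ (l : ℕ) ∈ discCantor M k A
    then dftMatrix (M ^ k) j l else 0

/-- `r_k = ‖1_{C_k(M,𝒜)} F_N 1_{C_k(M,𝒜)}‖_{ℓ²_N → ℓ²_N}`, the operator norm on
`ℓ²_N = EuclideanSpace ℂ (Fin N)` with `N = M^k`. -/
noncomputable def rNorm (M k : ℕ) (A : Finset ℕ) : ℝ :=
  ‖Matrix.toEuclideanCLM (𝕜 := ℂ) (cantorOp M k A)‖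

/-- The space of alphabets `𝔄(M, A)`: subsets of `{0, …, M-1}` of cardinality `A`. -/
def alphabets (M A : ℕ) : Finset (Finset ℕ) :=
  (Finset.range M).powersetCard A

open scoped symmDiff

/-!
A uniformly random `(n + 1)`-subset of `S` is obtained by choosing a uniform `a ∈ S` and then a
uniform `n`-subset of `S \ {a}`. On the sets containing `a`, a function that is `K`-Lipschitz for
the symmetric-difference distance is again `K`-Lipschitz on the `n`-slice of `S \ {a}`, and the
transposition of `a` and `b` shows that the conditional means given `a` and given `b` differ by at
most `2K`. Inducting on `n`, each step adds at most `K²` to the variance (Popoviciu) and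
multiplies the moment generating function by at most `exp (2 l² K²)` (a Hoeffding-type bound).
For complex `F`, the moment bound is applied to `G = ‖F - 𝔼 F‖`, whose mean is at most
`√(2n) K` by the variance bounds for the real and imaginary parts, and a Chernoff bound with
`l = t / (8 n K²)` concludes.
-/

open Finset Real

namespace Finset

section Real

variable {ι : Type*} {s : Finset ι} {f : ι → ℝ}

theorem expect_le_of_forall_le {c : ℝ} (hc : 0 ≤ c) (hf : ∀ i ∈ s, f i ≤ c) :
    𝔼 i ∈ s, f i ≤ c := by
  obtain rfl | hs := s.eq_empty_or_nonempty
  · simpa using hc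
  · exact expect_le hs hf

theorem expect_sub_expect_eq_zero (hs : s.Nonempty) : 𝔼 i ∈ s, (f i - 𝔼 j ∈ s, f j) = 0 := by
  rw [expect_sub_distrib, expect_const hs, sub_self]

theorem expect_sq_sub_eq (hs : s.Nonempty) (c : ℝ) :
    𝔼 i ∈ s, (f i - c) ^ 2 =
      𝔼 i ∈ s, (f i - 𝔼 j ∈ s, f j) ^ 2 + (𝔼 j ∈ s, f j - c) ^ 2 := by
  set m := 𝔼 j ∈ s, f j
  have hsplit : ∀ i, (f i - c) ^ 2 = (f i - m) ^ 2 + (2 * (m - c) * (f i - m) + (m - c) ^ 2) :=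
    fun i => by ring
  rw [expect_congr rfl fun i _ => hsplit i, expect_add_distrib, expect_add_distrib,
    ← mul_expect, expect_sub_expect_eq_zero hs, expect_const hs, mul_zero, zero_add]

theorem expect_sq_sub_le (c : ℝ) :
    𝔼 i ∈ s, (f i - c) ^ 2 ≤
      𝔼 i ∈ s, (f i - 𝔼 j ∈ s, f j) ^ 2 + (𝔼 j ∈ s, f j - c) ^ 2 := by
  obtain rfl | hs := s.eq_empty_or_nonempty
  · simpa using sq_nonneg _
  · exact (expect_sq_sub_eq hs c).le

theorem sq_expect_le_expect_sq : (𝔼 i ∈ s, f i) ^ 2 ≤ 𝔼 i ∈ s, f i ^ 2 := by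
  obtain rfl | hs := s.eq_empty_or_nonempty
  · simp
  have hvar := expect_sq_sub_eq (f := f) hs 0
  simp only [sub_zero] at hvar
  rw [hvar]
  exact le_add_of_nonneg_left (expect_nonneg fun i _ => sq_nonneg _)

theorem expect_sq_sub_expect_le_of_abs_sub_le {L : ℝ}
    (hf : ∀ i ∈ s, ∀ j ∈ s, |f i - f j| ≤ L) :
    𝔼 i ∈ s, (f i - 𝔼 j ∈ s, f j) ^ 2 ≤ (L / 2) ^ 2 := by
  obtain rfl | hs := s.eq_empty_or_nonempty
  · simpa using sq_nonneg _
  obtain ⟨i₀, hi₀, hmin⟩ := s.exists_min_image f hs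
  calc 𝔼 i ∈ s, (f i - 𝔼 j ∈ s, f j) ^ 2
      ≤ 𝔼 i ∈ s, (f i - (f i₀ + L / 2)) ^ 2 :=
        (le_add_of_nonneg_right (sq_nonneg _)).trans_eq (expect_sq_sub_eq hs _).symm
    _ ≤ (L / 2) ^ 2 := expect_le hs fun i hi => by
        have h₁ := hmin i hi
        have h₂ := (le_abs_self _).trans (hf i hi i₀ hi₀)
        exact sq_le_sq' (by linarith) (by linarith)

theorem exp_expect_le_expect_exp (hs : s.Nonempty) :
    exp (𝔼 i ∈ s, f i) ≤ 𝔼 i ∈ s, exp (f i) := by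
  set m := 𝔼 i ∈ s, f i
  calc exp m = exp m * 𝔼 i ∈ s, (f i - m + 1) := by
        rw [expect_add_distrib, expect_sub_expect_eq_zero hs, expect_const hs, zero_add, mul_one]
    _ ≤ exp m * 𝔼 i ∈ s, exp (f i - m) := by
        gcongr with i; exact add_one_le_exp _
    _ = 𝔼 i ∈ s, exp (f i) := by
        rw [mul_expect]; exact expect_congr rfl fun i _ => by rw [← exp_add, add_sub_cancel]

theorem expect_exp_mul_sub_expect_le_of_abs_sub_le {L : ℝ}
    (hf : ∀ i ∈ s, ∀ j ∈ s, |f i - f j| ≤ L) (l : ℝ) :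
    𝔼 i ∈ s, exp (l * (f i - 𝔼 j ∈ s, f j)) ≤ exp (l ^ 2 * L ^ 2 / 2) := by
  obtain rfl | hs := s.eq_empty_or_nonempty
  · simpa using (exp_pos _).le
  have hjensen : ∀ i ∈ s,
      exp (l * (f i - 𝔼 j ∈ s, f j)) ≤ 𝔼 j ∈ s, exp (l * (f i - f j)) := by
    intro i _
    convert exp_expect_le_expect_exp (f := fun j => l * (f i - f j)) hs using 2
    rw [← mul_expect, expect_sub_distrib, expect_const hs]
  have hsymm : 𝔼 i ∈ s, 𝔼 j ∈ s, exp (l * (f i - f j)) =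
      𝔼 i ∈ s, 𝔼 j ∈ s, cosh (l * (f i - f j)) := by
    have hswap : 𝔼 i ∈ s, 𝔼 j ∈ s, exp (-(l * (f i - f j))) =
        𝔼 i ∈ s, 𝔼 j ∈ s, exp (l * (f i - f j)) := by
      rw [expect_comm]; simp only [neg_mul_eq_mul_neg, neg_sub]
    simp only [cosh_eq, ← expect_div, expect_add_distrib, hswap]
    ring
  calc 𝔼 i ∈ s, exp (l * (f i - 𝔼 j ∈ s, f j))
      ≤ 𝔼 i ∈ s, 𝔼 j ∈ s, exp (l * (f i - f j)) := expect_le_expect hjensen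
    _ = 𝔼 i ∈ s, 𝔼 j ∈ s, cosh (l * (f i - f j)) := hsymm
    _ ≤ exp (l ^ 2 * L ^ 2 / 2) := expect_le hs fun i hi => expect_le hs fun j hj => by
        refine (cosh_le_exp_half_sq _).trans (exp_le_exp.2 ?_)
        have hd : (f i - f j) ^ 2 ≤ L ^ 2 := sq_le_sq.2 ((hf i hi j hj).trans (le_abs_self L))
        rw [mul_pow]
        linarith [mul_le_mul_of_nonneg_left hd (sq_nonneg l)]

theorem card_filter_le_div_card_le_expect_exp {l : ℝ} (hl : 0 ≤ l) (t : ℝ) :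
    (#(s.filter (t ≤ f ·)) : ℝ) / #s ≤ 𝔼 i ∈ s, exp (l * (f i - t)) := by
  rw [card_filter, Nat.cast_sum, ← expect_eq_sum_div_card]
  refine expect_le_expect fun i _ => ?_
  split_ifs with hi
  · exact_mod_cast one_le_exp (mul_nonneg hl (sub_nonneg.2 hi))
  · exact_mod_cast (exp_pos _).le

end Real

variable {α : Type*} [DecidableEq α]

theorem notMem_of_mem_powersetCard_erase {S B : Finset α} {a : α} {n : ℕ}
    (hB : B ∈ (S.erase a).powersetCard n) : a ∉ B :=
  fun h => notMem_erase a S ((mem_powersetCard.1 hB).1 h)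

theorem insert_mem_powersetCard_succ {S B : Finset α} {a : α} {n : ℕ} (ha : a ∈ S)
    (hB : B ∈ (S.erase a).powersetCard n) : insert a B ∈ S.powersetCard (n + 1) := by
  obtain ⟨hBS, rfl⟩ := mem_powersetCard.1 hB
  exact mem_powersetCard.2 ⟨insert_subset ha (hBS.trans (erase_subset a S)),
    card_insert_of_notMem (notMem_of_mem_powersetCard_erase hB)⟩

theorem map_swap_mem_powersetCard_erase {S B : Finset α} {a b : α} {n : ℕ} (ha : a ∈ S)
    (hb : b ∈ S) (hB : B ∈ (S.erase a).powersetCard n) :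
    B.map (Equiv.swap a b).toEmbedding ∈ (S.erase b).powersetCard n := by
  have hS : (S.erase a).map (Equiv.swap a b).toEmbedding = S.erase b := by
    rw [map_erase, map_perm, Equiv.coe_toEmbedding, Equiv.swap_apply_left]
    intro y hy
    by_contra hyS
    exact hy (Equiv.swap_apply_of_ne_of_ne (fun h => hyS (h ▸ ha)) (fun h => hyS (h ▸ hb)))
  rw [← hS, powersetCard_map]
  exact mem_map_of_mem _ hB

theorem insert_symmDiff_insert {B₁ B₂ : Finset α} {a : α} (h₁ : a ∉ B₁) (h₂ : a ∉ B₂) :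
    insert a B₁ ∆ insert a B₂ = B₁ ∆ B₂ := by
  ext x
  by_cases hx : x = a
  · subst hx; simp [mem_symmDiff, h₁, h₂]
  · simp [mem_symmDiff, hx]

theorem card_symmDiff_map_swap_le (x : Finset α) (a b : α) :
    #(x ∆ x.map (Equiv.swap a b).toEmbedding) ≤ 2 := by
  refine (card_le_card fun y hy => ?_).trans (card_le_two (a := a) (b := b))
  by_contra hab
  simp only [mem_insert, mem_singleton, not_or] at hab
  simp [mem_symmDiff, mem_map_equiv, Equiv.swap_apply_of_ne_of_ne hab.1 hab.2] at hy

theorem sum_sum_erase_powersetCard_insert {M : Type*} [AddCommMonoid M] (S : Finset α)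
    (n : ℕ) (f : Finset α → M) :
    ∑ a ∈ S, ∑ B ∈ (S.erase a).powersetCard n, f (insert a B) =
      (n + 1) • ∑ x ∈ S.powersetCard (n + 1), f x := by
  have hfiber : ∀ a ∈ S, ∑ B ∈ (S.erase a).powersetCard n, f (insert a B) =
      ∑ x ∈ (S.powersetCard (n + 1)).filter (a ∈ ·), f x := by
    intro a ha
    refine sum_nbij' (insert a) (erase · a) (fun B hB => ?_) (fun x hx => ?_)
      (fun B hB => erase_insert (notMem_of_mem_powersetCard_erase hB))
      (fun x hx => insert_erase (mem_filter.1 hx).2) (fun _ _ => rfl)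
    · exact mem_filter.2 ⟨insert_mem_powersetCard_succ ha hB, mem_insert_self a B⟩
    · obtain ⟨hxP, hax⟩ := mem_filter.1 hx
      obtain ⟨hxS, hcard⟩ := mem_powersetCard.1 hxP
      exact mem_powersetCard.2
        ⟨erase_subset_erase a hxS, by rw [card_erase_of_mem hax, hcard]; rfl⟩
  rw [sum_congr rfl hfiber, smul_sum,
    ← sum_comm' (t := id) (s' := fun a => (S.powersetCard (n + 1)).filter (a ∈ ·))
      (f := fun x _ => f x)]
  · refine sum_congr rfl fun x hx => ?_
    rw [sum_const, id, (mem_powersetCard.1 hx).2]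
  · intro x a
    simp only [id, mem_filter, mem_powersetCard]
    exact ⟨fun h => ⟨⟨h.1, h.2⟩, h.1.1 h.2⟩, fun h => ⟨h.1.1, h.1.2⟩⟩

theorem expect_powersetCard_succ {M : Type*} [AddCommMonoid M] [Module ℚ≥0 M] (S : Finset α)
    (n : ℕ) (f : Finset α → M) :
    𝔼 x ∈ S.powersetCard (n + 1), f x =
      𝔼 a ∈ S, 𝔼 B ∈ (S.erase a).powersetCard n, f (insert a B) := by
  obtain rfl | hS := S.eq_empty_or_nonempty
  · rw [powersetCard_eq_empty.2 n.succ_pos, expect_empty, expect_empty]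
  obtain ⟨m, hm⟩ : ∃ m, #S = m + 1 := Nat.exists_eq_add_one.2 hS.card_pos
  have hinner : ∀ a ∈ S, 𝔼 B ∈ (S.erase a).powersetCard n, f (insert a B) =
      (m.choose n : ℚ≥0)⁻¹ • ∑ B ∈ (S.erase a).powersetCard n, f (insert a B) := by
    intro a ha
    rw [expect, card_powersetCard, card_erase_of_mem ha, hm, Nat.add_sub_cancel]
  rw [expect_congr rfl hinner, ← smul_expect, expect, expect, sum_sum_erase_powersetCard_insert,
    card_powersetCard, hm, smul_smul, ← Nat.cast_smul_eq_nsmul ℚ≥0, smul_smul]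
  congr 1
  have hcount : ((m + 1 : ℕ) : ℚ≥0) * m.choose n = (m + 1).choose (n + 1) * (n + 1 : ℕ) := by
    exact_mod_cast Nat.add_one_mul_choose_eq m n
  rw [← mul_inv_rev, hcount, mul_inv, mul_assoc, inv_mul_cancel₀ (by positivity), mul_one]

end Finset

section SymmDiffLipschitzOn

variable {α : Type*} [DecidableEq α]

def SymmDiffLipschitzOn {β : Type*} [PseudoMetricSpace β] (K : ℝ) (h : Finset α → β)
    (s : Finset (Finset α)) : Prop :=
  ∀ x ∈ s, ∀ y ∈ s, dist (h x) (h y) ≤ K * #(x ∆ y)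

theorem SymmDiffLipschitzOn.comp {β γ : Type*} [PseudoMetricSpace β] [PseudoMetricSpace γ]
    {K : ℝ} {L : NNReal} {h : Finset α → β} {s : Finset (Finset α)} {g : β → γ}
    (hg : LipschitzWith L g) (hh : SymmDiffLipschitzOn K h s) :
    SymmDiffLipschitzOn (L * K) (g ∘ h) s := fun x hx y hy =>
  (hg.dist_le_mul _ _).trans <| by
    rw [mul_assoc]; exact mul_le_mul_of_nonneg_left (hh x hx y hy) L.2

theorem SymmDiffLipschitzOn.comp_insert {β : Type*} [PseudoMetricSpace β] {K : ℝ}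
    {h : Finset α → β} {S : Finset α} {n : ℕ} {a : α}
    (hh : SymmDiffLipschitzOn K h (S.powersetCard (n + 1))) (ha : a ∈ S) :
    SymmDiffLipschitzOn K (fun B => h (insert a B)) ((S.erase a).powersetCard n) := by
  intro B₁ h₁ B₂ h₂
  have := hh _ (insert_mem_powersetCard_succ ha h₁) _ (insert_mem_powersetCard_succ ha h₂)
  rwa [insert_symmDiff_insert (notMem_of_mem_powersetCard_erase h₁)
    (notMem_of_mem_powersetCard_erase h₂)] at this

variable {K : ℝ} {h : Finset α → ℝ} {S : Finset α} {n : ℕ}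

theorem SymmDiffLipschitzOn.abs_expect_insert_sub_le (hK : 0 ≤ K)
    (hh : SymmDiffLipschitzOn K h (S.powersetCard (n + 1))) {a b : α} (ha : a ∈ S)
    (hb : b ∈ S) :
    |𝔼 B ∈ (S.erase a).powersetCard n, h (insert a B) -
      𝔼 B ∈ (S.erase b).powersetCard n, h (insert b B)| ≤ 2 * K := by
  set σ := (Equiv.swap a b).toEmbedding
  have hreindex : 𝔼 B ∈ (S.erase b).powersetCard n, h (insert b B) =
      𝔼 B ∈ (S.erase a).powersetCard n, h ((insert a B).map σ) := by
    refine (expect_nbij' (·.map σ) (·.map σ) (fun B hB => ?_) (fun B hB => ?_)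
      (fun B _ => ?_) (fun B _ => ?_) (fun B _ => ?_)).symm
    · exact map_swap_mem_powersetCard_erase ha hb hB
    · rw [show σ = (Equiv.swap b a).toEmbedding by rw [Equiv.swap_comm]]
      exact map_swap_mem_powersetCard_erase hb ha hB
    · ext; simp [σ, mem_map_equiv]
    · ext; simp [σ, mem_map_equiv]
    · rw [map_insert, Equiv.coe_toEmbedding, Equiv.swap_apply_left]
  rw [hreindex, ← expect_sub_distrib]
  refine (abs_expect_le _ _).trans (expect_le_of_forall_le (by positivity) fun B hB => ?_)
  have hX := insert_mem_powersetCard_succ ha hB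
  have hσX : (insert a B).map σ ∈ S.powersetCard (n + 1) := by
    rw [map_insert, Equiv.coe_toEmbedding, Equiv.swap_apply_left]
    exact insert_mem_powersetCard_succ hb (map_swap_mem_powersetCard_erase ha hb hB)
  calc |h (insert a B) - h ((insert a B).map σ)|
      ≤ K * #(insert a B ∆ (insert a B).map σ) := hh _ hX _ hσX
    _ ≤ K * 2 := by gcongr; exact_mod_cast card_symmDiff_map_swap_le _ a b
    _ = 2 * K := mul_comm _ _

theorem SymmDiffLipschitzOn.expect_sq_sub_expect_le (hK : 0 ≤ K)
    (hh : SymmDiffLipschitzOn K h (S.powersetCard n)) :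
    𝔼 x ∈ S.powersetCard n, (h x - 𝔼 y ∈ S.powersetCard n, h y) ^ 2 ≤ n * K ^ 2 := by
  induction n generalizing S h with
  | zero => simp
  | succ n ih =>
    set μ := 𝔼 y ∈ S.powersetCard (n + 1), h y
    set ν := fun a => 𝔼 B ∈ (S.erase a).powersetCard n, h (insert a B)
    have hμ : μ = 𝔼 a ∈ S, ν a := expect_powersetCard_succ S n h
    calc 𝔼 x ∈ S.powersetCard (n + 1), (h x - μ) ^ 2
        = 𝔼 a ∈ S, 𝔼 B ∈ (S.erase a).powersetCard n, (h (insert a B) - μ) ^ 2 :=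
          expect_powersetCard_succ S n _
      _ ≤ 𝔼 a ∈ S, (𝔼 B ∈ (S.erase a).powersetCard n, (h (insert a B) - ν a) ^ 2 +
            (ν a - μ) ^ 2) := expect_le_expect fun a _ => expect_sq_sub_le μ
      _ ≤ 𝔼 a ∈ S, (n * K ^ 2 + (ν a - μ) ^ 2) :=
          expect_le_expect fun a ha => by gcongr; exact ih (hh.comp_insert ha)
      _ ≤ n * K ^ 2 + (2 * K / 2) ^ 2 := by
          rw [expect_add_distrib, hμ]
          gcongr
          · exact expect_le_of_forall_le (by positivity) fun _ _ => le_rfl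
          · exact expect_sq_sub_expect_le_of_abs_sub_le fun a ha b hb =>
              hh.abs_expect_insert_sub_le hK ha hb
      _ = (n + 1 : ℕ) * K ^ 2 := by push_cast; ring

theorem SymmDiffLipschitzOn.expect_exp_mul_sub_expect_le (hK : 0 ≤ K)
    (hh : SymmDiffLipschitzOn K h (S.powersetCard n)) (l : ℝ) :
    𝔼 x ∈ S.powersetCard n, exp (l * (h x - 𝔼 y ∈ S.powersetCard n, h y)) ≤
      exp (2 * n * l ^ 2 * K ^ 2) := by
  induction n generalizing S h with
  | zero => simp
  | succ n ih =>
    set μ := 𝔼 y ∈ S.powersetCard (n + 1), h y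
    set ν := fun a => 𝔼 B ∈ (S.erase a).powersetCard n, h (insert a B)
    have hμ : μ = 𝔼 a ∈ S, ν a := expect_powersetCard_succ S n h
    calc 𝔼 x ∈ S.powersetCard (n + 1), exp (l * (h x - μ))
        = 𝔼 a ∈ S, 𝔼 B ∈ (S.erase a).powersetCard n, exp (l * (h (insert a B) - μ)) :=
          expect_powersetCard_succ S n _
      _ = 𝔼 a ∈ S, exp (l * (ν a - μ)) *
            𝔼 B ∈ (S.erase a).powersetCard n, exp (l * (h (insert a B) - ν a)) := by
          refine expect_congr rfl fun a _ => ?_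
          rw [mul_expect]
          refine expect_congr rfl fun B _ => ?_
          rw [← exp_add]; ring_nf
      _ ≤ 𝔼 a ∈ S, exp (l * (ν a - μ)) * exp (2 * n * l ^ 2 * K ^ 2) :=
          expect_le_expect fun a ha => by gcongr; exact ih (hh.comp_insert ha)
      _ ≤ exp (l ^ 2 * (2 * K) ^ 2 / 2) * exp (2 * n * l ^ 2 * K ^ 2) := by
          rw [← expect_mul, hμ]
          gcongr
          exact expect_exp_mul_sub_expect_le_of_abs_sub_le (fun a ha b hb =>
            hh.abs_expect_insert_sub_le hK ha hb) l
      _ = exp (2 * (n + 1 : ℕ) * l ^ 2 * K ^ 2) := by rw [← exp_add]; push_cast; ring_nf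

theorem SymmDiffLipschitzOn.card_filter_le_norm_sub_expect_div_card_le {F : Finset α → ℂ}
    {t : ℝ} (hn : 0 < n) (hK : 0 < K) (ht : 0 ≤ t)
    (hF : SymmDiffLipschitzOn K F (S.powersetCard n)) :
    (#((S.powersetCard n).filter fun x => t ≤ ‖F x - 𝔼 y ∈ S.powersetCard n, F y‖) : ℝ) /
        #(S.powersetCard n) ≤ 2 * exp (-t ^ 2 / (16 * n * K ^ 2)) := by
  set P := S.powersetCard n
  set c := 𝔼 y ∈ P, F y
  set G := fun x => ‖F x - c‖
  set m := 𝔼 x ∈ P, G x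
  set D : ℝ := n * K ^ 2
  have hD : 0 < D := by positivity
  have hG : SymmDiffLipschitzOn K G P := by
    simpa [Function.comp_def, dist_eq_norm] using hF.comp (LipschitzWith.dist_left c)
  have hre : SymmDiffLipschitzOn K (fun x => (F x).re) P := by
    simpa [Function.comp_def] using hF.comp (RCLike.lipschitzWith_re (K := ℂ))
  have him : SymmDiffLipschitzOn K (fun x => (F x).im) P := by
    simpa [Function.comp_def] using hF.comp (RCLike.lipschitzWith_im (K := ℂ))
  have hm : m ^ 2 ≤ 2 * D := by
    have hvar : 𝔼 x ∈ P, G x ^ 2 =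
        𝔼 x ∈ P, ((F x).re - c.re) ^ 2 + 𝔼 x ∈ P, ((F x).im - c.im) ^ 2 := by
      rw [← expect_add_distrib]
      refine expect_congr rfl fun x _ => ?_
      simp only [G, Complex.sq_norm, Complex.normSq_apply, Complex.sub_re, Complex.sub_im]
      ring
    have hvar_re := hre.expect_sq_sub_expect_le hK.le
    have hvar_im := him.expect_sq_sub_expect_le hK.le
    rw [← Complex.re_expect] at hvar_re
    rw [← Complex.im_expect] at hvar_im
    calc m ^ 2 ≤ 𝔼 x ∈ P, G x ^ 2 := sq_expect_le_expect_sq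
      _ ≤ 2 * D := by rw [hvar]; linarith
  set l := t / (8 * D)
  have hl : 0 ≤ l := by positivity
  -- `m ^ 2 ≤ 2 D` leaves an error of at most `1 / 4 < log 2` in the Chernoff exponent
  have hexponent :
      l * (m - t) + 2 * n * l ^ 2 * K ^ 2 ≤ log 2 + -t ^ 2 / (16 * n * K ^ 2) := by
    have hsplit : l * (m - t) + 2 * n * l ^ 2 * K ^ 2 =
        -t ^ 2 / (16 * n * K ^ 2) + (4 * t * m - t ^ 2) / (32 * D) := by
      simp only [l, D]; field_simp; ring
    have hquarter : (4 * t * m - t ^ 2) / (32 * D) ≤ 1 / 4 := by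
      rw [div_le_iff₀ (by positivity)]; nlinarith [sq_nonneg (t - 2 * m)]
    linarith [log_two_gt_d9]
  calc (#(P.filter fun x => t ≤ G x) : ℝ) / #P
      ≤ 𝔼 x ∈ P, exp (l * (G x - t)) := card_filter_le_div_card_le_expect_exp hl t
    _ = exp (l * (m - t)) * 𝔼 x ∈ P, exp (l * (G x - m)) := by
        rw [mul_expect]
        exact expect_congr rfl fun x _ => by rw [← exp_add]; ring_nf
    _ ≤ exp (l * (m - t)) * exp (2 * n * l ^ 2 * K ^ 2) := by
        gcongr; exact hG.expect_exp_mul_sub_expect_le hK.le l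
    _ ≤ exp (log 2 + -t ^ 2 / (16 * n * K ^ 2)) := by
        rw [← exp_add]; exact exp_le_exp.2 hexponent
    _ = 2 * exp (-t ^ 2 / (16 * n * K ^ 2)) := by rw [exp_add, exp_log two_pos]

end SymmDiffLipschitzOn

theorem stmt2_general (M A : ℕ) (hA1 : 1 < A)
    (F : Finset ℕ → ℂ) (K : ℝ) (hK : 0 < K)
    (hLip : ∀ 𝒜₁ ∈ alphabets M A, ∀ 𝒜₂ ∈ alphabets M A, 𝒜₁ ≠ 𝒜₂ →
      ‖F 𝒜₁ - F 𝒜₂‖ ≤ K * ((𝒜₁ ∆ 𝒜₂).card : ℝ))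
    (t : ℝ) (ht : 0 < t) :
    (((alphabets M A).filter (fun 𝒜 =>
        t ≤ ‖F 𝒜 -
          (∑ ℬ ∈ alphabets M A, F ℬ) / ((alphabets M A).card : ℂ)‖)).card : ℝ) /
      ((alphabets M A).card : ℝ) ≤ 2 * Real.exp (-t ^ 2 / (16 * A * K ^ 2)) := by
  have hF : SymmDiffLipschitzOn K F (alphabets M A) := fun x hx y hy => by
    rcases eq_or_ne x y with rfl | hxy
    · simp
    · rw [dist_eq_norm]; exact hLip x hx y hy hxy
  simp_rw [← expect_eq_sum_div_card]
  exact hF.card_filter_le_norm_sub_expect_div_card_le (by omega) hK ht.le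

/-- Theorem 2.1, concentration of measure in the space of alphabets:
for any `F : 𝔄(M,A) → ℂ` with Lipschitz constant `K > 0` (for the symmetric-difference
metric) and any `t > 0`,
`μ({𝒜 : |F(𝒜) - 𝔼(F)| ≥ t}) ≤ 2 exp(-t²/(16 A K²))`. -/
theorem stmt2 (M A : ℕ) (hM : 3 ≤ M) (hA1 : 1 < A) (hA2 : A < M)
    (F : Finset ℕ → ℂ) (K : ℝ) (hK : 0 < K)
    (hLip : ∀ 𝒜₁ ∈ alphabets M A, ∀ 𝒜₂ ∈ alphabets M A, 𝒜₁ ≠ 𝒜₂ →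
      ‖F 𝒜₁ - F 𝒜₂‖ ≤ K * ((𝒜₁ ∆ 𝒜₂).card : ℝ))
    (t : ℝ) (ht : 0 < t) :
    (((alphabets M A).filter (fun 𝒜 =>
        t ≤ ‖F 𝒜 -
          (∑ ℬ ∈ alphabets M A, F ℬ) / ((alphabets M A).card : ℂ)‖)).card : ℝ) /
      ((alphabets M A).card : ℝ) ≤ 2 * Real.exp (-t ^ 2 / (16 * A * K ^ 2)) :=
  stmt2_general M A hA1 F K hK hLip t ht
end

section
/- Let M, A ∈ ℕ with M ≥ 3 and 1 < A < M. Then for any function F : Π(M,A) → ℂ with ‖F‖_Lip > 0 and any t > 0, μ^p({π ∈ Π(M,A) : |F(π) − 𝔼^p(F)| ≥ t}) ≤ 2·exp(−t²/(16·A·‖F‖²_Lip)), where 𝔼^p(F) is the expectation of F with respect to μ^p. -/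
open scoped BigOperators

/-!
Reveal an injective tuple `π : Fin (n + 1) ↪ β` one value at a time. Conditioning on `π 0 = b`
leaves a uniform injective tuple `Fin n ↪ {x // x ≠ b}`, all these fibres having the same size,
so the moment generating function of `f - 𝔼 f` factors into that of the fibre averages `g b`
times those of `f` on the fibres. Composing with the swap of `b` and `b'` changes a tuple in at
most two places, so `g b - g b' ≤ 2 K` and Hoeffding's lemma bounds the first factor by
`exp (K² l² / 2)`; induction on `n` bounds the second. Hence the real and imaginary parts of
`F - 𝔼 F` are sub-Gaussian with variance proxy `A K²`, and a Chernoff bound on the four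
half-planes `± re, ± im ≥ t / √2` gives `4 exp (-t² / (4 A K²))`. Combined with the trivial
bound `1`, this is at most `2 exp (-t² / (16 A K²))`.
-/

open MeasureTheory ProbabilityTheory Finset Function
open Real (exp exp_pos)
open scoped NNReal

section UniformMeasure

variable {ι : Type*} [Fintype ι] [MeasurableSpace ι] [MeasurableSingletonClass ι]

lemma integral_uniformOn_univ (f : ι → ℝ) :
    ∫ i, f i ∂uniformOn (Set.univ : Set ι) = 𝔼 i, f i := by
  rw [integral_fintype .of_finite, expect_eq_sum_div_card, sum_div]
  refine sum_congr rfl fun i _ => ?_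
  simp [measureReal_def, uniformOn_univ, div_eq_inv_mul]

lemma measureReal_uniformOn_univ (p : ι → Prop) [DecidablePred p] :
    (uniformOn (Set.univ : Set ι)).real {i | p i} = #{i | p i} / Fintype.card ι := by
  rw [measureReal_def, uniformOn_univ, ← coe_filter_univ, Measure.count_apply_finset]
  simp

lemma hasSubgaussianMGF_uniformOn_univ_iff {X : ι → ℝ} {c : ℝ≥0} :
    HasSubgaussianMGF X c (uniformOn Set.univ) ↔
      ∀ t, 𝔼 i, exp (t * X i) ≤ exp (c * t ^ 2 / 2) :=
  ⟨fun h t => by simpa [mgf, integral_uniformOn_univ] using h.mgf_le t,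
    fun h => ⟨fun _ => .of_finite, fun t => by simpa [mgf, integral_uniformOn_univ] using h t⟩⟩

end UniformMeasure

lemma expect_exp_mul_sub_expect_le_of_sub_le {ι : Type*} [Fintype ι] {f : ι → ℝ} {K : ℝ}
    (hf : ∀ i j, f i - f j ≤ 2 * K) (l : ℝ) :
    𝔼 i, exp (l * (f i - 𝔼 j, f j)) ≤ exp (K ^ 2 * l ^ 2 / 2) := by
  cases isEmpty_or_nonempty ι
  · simp [(exp_pos _).le]
  let _ : MeasurableSpace ι := ⊤
  obtain ⟨i₀, -, hi₀⟩ := exists_min_image univ f univ_nonempty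
  have hf_mem : ∀ i, f i ∈ Set.Icc (f i₀) (f i₀ + 2 * K) :=
    fun i => ⟨hi₀ i (mem_univ i), by linarith [hf i i₀]⟩
  have hoeffding :=
    hasSubgaussianMGF_of_mem_Icc (μ := uniformOn Set.univ) .of_discrete (ae_of_all _ hf_mem)
  rw [integral_uniformOn_univ, hasSubgaussianMGF_uniformOn_univ_iff] at hoeffding
  convert hoeffding l using 3
  simp

lemma Fintype.expect_sigma_of_card_eq {ι R : Type*} {κ : ι → Type*} [Fintype ι]
    [∀ i, Fintype (κ i)] [Semifield R] [CharZero R] {c : ℕ} (hc : ∀ i, Fintype.card (κ i) = c)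
    (f : (Σ i, κ i) → R) :
    𝔼 x, f x = 𝔼 i, 𝔼 k, f ⟨i, k⟩ := by
  simp only [expect_eq_sum_div_card, card_univ, Fintype.card_sigma, hc, sum_const, smul_eq_mul,
    ← sum_div, div_div, Fintype.sum_sigma]
  rw [Nat.cast_mul, mul_comm]

lemma measureReal_le_norm_le_of_hasSubgaussianMGF {Ω : Type*} [MeasurableSpace Ω]
    {μ : Measure Ω} [IsFiniteMeasure μ] {Z : Ω → ℂ} {c : ℝ≥0}
    (hre : HasSubgaussianMGF (fun ω => (Z ω).re) c μ)
    (him : HasSubgaussianMGF (fun ω => (Z ω).im) c μ) {t : ℝ} (ht : 0 ≤ t) :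
    μ.real {ω | t ≤ ‖Z ω‖} ≤ 4 * exp (-t ^ 2 / (4 * c)) := by
  set s := t / √2
  have hs_sq : s ^ 2 = t ^ 2 / 2 := by rw [div_pow, Real.sq_sqrt zero_le_two]
  have htail {X : Ω → ℝ} (hX : HasSubgaussianMGF X c μ) :
      μ.real {ω | s ≤ X ω} ≤ exp (-t ^ 2 / (4 * c)) :=
    (hX.measure_ge_le (by positivity)).trans_eq (by rw [hs_sq]; ring_nf)
  -- `‖z‖² = re² + im²`, so one of `|re z|`, `|im z|` is at least `‖z‖ / √2`.
  have hsub : {ω | t ≤ ‖Z ω‖} ⊆ ({ω | s ≤ (Z ω).re} ∪ {ω | s ≤ -(Z ω).re}) ∪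
      ({ω | s ≤ (Z ω).im} ∪ {ω | s ≤ -(Z ω).im}) := by
    intro ω hω
    have hnorm : t ^ 2 ≤ (Z ω).re * (Z ω).re + (Z ω).im * (Z ω).im := by
      rw [← Complex.normSq_apply, ← Complex.sq_norm]
      exact pow_le_pow_left₀ ht hω 2
    by_contra! hcon
    simp only [Set.mem_union, Set.mem_ofPred_eq, not_or, not_le] at hcon
    nlinarith [hcon.1.1, hcon.1.2, hcon.2.1, hcon.2.2]
  calc μ.real {ω | t ≤ ‖Z ω‖}
      ≤ μ.real (({ω | s ≤ (Z ω).re} ∪ {ω | s ≤ -(Z ω).re}) ∪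
          ({ω | s ≤ (Z ω).im} ∪ {ω | s ≤ -(Z ω).im})) := measureReal_mono hsub
    _ ≤ (μ.real {ω | s ≤ (Z ω).re} + μ.real {ω | s ≤ -(Z ω).re}) +
          (μ.real {ω | s ≤ (Z ω).im} + μ.real {ω | s ≤ -(Z ω).im}) :=
        (measureReal_union_le _ _).trans
          (add_le_add (measureReal_union_le _ _) (measureReal_union_le _ _))
    _ ≤ 4 * exp (-t ^ 2 / (4 * c)) := by
        linarith [htail hre, htail (X := fun ω => -(Z ω).re) hre.neg, htail him,
          htail (X := fun ω => -(Z ω).im) him.neg]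

lemma le_two_mul_exp_neg_div_four {p x : ℝ} (h₁ : p ≤ 1) (h₄ : p ≤ 4 * exp (-x)) :
    p ≤ 2 * exp (-x / 4) := by
  rcases le_or_gt x 2 with hx | hx
  · linarith [Real.add_one_le_exp (-x / 4)]
  · have hsplit : exp (-x) * exp (3 * x / 4) = exp (-x / 4) := by rw [← Real.exp_add]; ring_nf
    nlinarith [Real.add_one_le_exp (3 * x / 4), exp_pos (-x)]

section Embedding

variable {n : ℕ} {β : Type*}

def consNe (b : β) (π : Fin n ↪ {x // x ≠ b}) : Fin (n + 1) ↪ β :=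
  ⟨Fin.cons b (Subtype.val ∘ π),
    Fin.cons_injective_iff.2 ⟨fun ⟨j, hj⟩ => (π j).2 hj, Subtype.val_injective.comp π.injective⟩⟩

@[simp] lemma coe_consNe (b : β) (π : Fin n ↪ {x // x ≠ b}) :
    ⇑(consNe b π) = Fin.cons b (Subtype.val ∘ π) := rfl

variable (n β) in
def embeddingFinSuccEquivSigma : (Fin (n + 1) ↪ β) ≃ Σ b : β, (Fin n ↪ {x // x ≠ b}) where
  toFun π := ⟨π 0, ⟨fun j => ⟨π j.succ, π.injective.ne j.succ_ne_zero⟩,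
    fun _ _ h => Fin.succ_injective _ (π.injective (congrArg Subtype.val h))⟩⟩
  invFun p := consNe p.1 p.2
  left_inv π := by ext i; cases i using Fin.cases <;> rfl
  right_inv _ := rfl

variable [DecidableEq β]

lemma hammingDist_cons (a b : β) (x y : Fin n → β) :
    hammingDist (Fin.cons a x : Fin (n + 1) → β) (Fin.cons b y) =
      (if a = b then 0 else 1) + hammingDist x y := by
  simp only [hammingDist, card_filter, Fin.sum_univ_succ, Fin.cons_zero, Fin.cons_succ, ne_eq,
    ite_not]

lemma hammingDist_swap_comp_le_one {ι : Type*} [Fintype ι] {x : ι → β} (hx : Injective x)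
    {b b' : β} (hb : ∀ i, x i ≠ b) : hammingDist x (Equiv.swap b b' ∘ x) ≤ 1 := by
  calc hammingDist x (Equiv.swap b b' ∘ x) ≤ #{i | x i = b'} := by
        refine card_le_card fun i => ?_
        simp only [mem_filter, mem_univ, true_and, comp_apply]
        contrapose!
        exact fun h => (Equiv.swap_apply_of_ne_of_ne (hb i) h).symm
    _ ≤ 1 := card_le_one.2 fun i hi j hj => hx ((mem_filter.1 hi).2.trans (mem_filter.1 hj).2.symm)

def swapSubtypeNe (b b' : β) : {x // x ≠ b} ≃ {x // x ≠ b'} :=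
  (Equiv.swap b b').subtypeEquiv fun x => by
    rw [ne_eq, ne_eq, Equiv.swap_apply_eq_iff, Equiv.swap_apply_right]

lemma hammingDist_consNe (b : β) (π₁ π₂ : Fin n ↪ {x // x ≠ b}) :
    hammingDist ⇑(consNe b π₁) ⇑(consNe b π₂) = hammingDist ⇑π₁ ⇑π₂ := by
  rw [coe_consNe, coe_consNe, hammingDist_cons, if_pos rfl, zero_add]
  exact hammingDist_comp (fun _ => Subtype.val) fun _ => Subtype.val_injective

lemma hammingDist_consNe_swap_le (b b' : β) (π : Fin n ↪ {x // x ≠ b}) :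
    hammingDist ⇑(consNe b π) ⇑(consNe b' (π.trans (swapSubtypeNe b b').toEmbedding)) ≤ 2 := by
  rw [coe_consNe, coe_consNe, hammingDist_cons]
  have hswap : Subtype.val ∘ ⇑(π.trans (swapSubtypeNe b b').toEmbedding) =
      Equiv.swap b b' ∘ Subtype.val ∘ π := rfl
  rw [hswap]
  have htail := hammingDist_swap_comp_le_one (x := Subtype.val ∘ π)
    (Subtype.val_injective.comp π.injective) (fun j => (π j).2) (b' := b')
  have hhead : (if b = b' then 0 else 1) ≤ 1 := by split <;> simp
  omega

variable [Fintype β]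

lemma card_embedding_subtype_ne (b : β) :
    Fintype.card (Fin n ↪ {x // x ≠ b}) = (Fintype.card β - 1).descFactorial n := by
  rw [Fintype.card_embedding_eq, Fintype.card_fin, Fintype.card_subtype_compl,
    Fintype.card_subtype_eq]

lemma expect_embedding_finSucc (h : (Fin (n + 1) ↪ β) → ℝ) :
    𝔼 π, h π = 𝔼 b, 𝔼 π : Fin n ↪ {x // x ≠ b}, h (consNe b π) :=
  (Fintype.expect_equiv (embeddingFinSuccEquivSigma n β) _ (fun p => h (consNe p.1 p.2))
    fun π => congrArg h ((embeddingFinSuccEquivSigma n β).symm_apply_apply π).symm).trans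
    (Fintype.expect_sigma_of_card_eq (card_embedding_subtype_ne (n := n)) _)

lemma expect_consNe_sub_expect_consNe_le {f : (Fin (n + 1) ↪ β) → ℝ} {K : ℝ≥0}
    (hf : ∀ π₁ π₂, |f π₁ - f π₂| ≤ K * hammingDist ⇑π₁ ⇑π₂) (b b' : β) :
    𝔼 π, f (consNe b π) - 𝔼 π, f (consNe b' π) ≤ 2 * K := by
  let σ := Equiv.embeddingCongr (Equiv.refl (Fin n)) (swapSubtypeNe b b')
  rw [← Fintype.expect_equiv σ (fun π => f (consNe b' (σ π))) (fun π => f (consNe b' π))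
    fun _ => rfl, ← expect_sub_distrib]
  have hterm : ∀ π, f (consNe b π) - f (consNe b' (σ π)) ≤ 2 * K := fun π =>
    calc f (consNe b π) - f (consNe b' (σ π)) ≤ K * hammingDist ⇑(consNe b π) ⇑(consNe b' (σ π)) :=
          (le_abs_self _).trans (hf _ _)
      _ ≤ K * 2 := by gcongr; exact_mod_cast hammingDist_consNe_swap_le b b' π
      _ = 2 * K := mul_comm _ _
  rcases isEmpty_or_nonempty (Fin n ↪ {x // x ≠ b})
  · simp
  · exact expect_le univ_nonempty fun π _ => hterm π

theorem expect_exp_mul_sub_expect_le_of_lipschitz {f : (Fin n ↪ β) → ℝ} {K : ℝ≥0}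
    (hf : ∀ π₁ π₂, |f π₁ - f π₂| ≤ K * hammingDist ⇑π₁ ⇑π₂)
    (l : ℝ) : 𝔼 π, exp (l * (f π - 𝔼 σ, f σ)) ≤ exp (n * K ^ 2 * l ^ 2 / 2) := by
  induction n generalizing β with
  | zero => simp
  | succ n ih =>
    set g : β → ℝ := fun b => 𝔼 π, f (consNe b π)
    have hmean : 𝔼 σ, f σ = 𝔼 b, g b := expect_embedding_finSucc f
    have hfiber (b : β) : 𝔼 π, exp (l * (f (consNe b π) - g b)) ≤ exp (n * K ^ 2 * l ^ 2 / 2) :=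
      ih (fun π₁ π₂ => by rw [← hammingDist_consNe b]; exact hf _ _)
    have hg : 𝔼 b, exp (l * (g b - 𝔼 b', g b')) ≤ exp (K ^ 2 * l ^ 2 / 2) :=
      expect_exp_mul_sub_expect_le_of_sub_le (expect_consNe_sub_expect_consNe_le hf) l
    calc 𝔼 π, exp (l * (f π - 𝔼 σ, f σ))
        = 𝔼 b, exp (l * (g b - 𝔼 b', g b')) * 𝔼 π, exp (l * (f (consNe b π) - g b)) := by
          rw [hmean, expect_embedding_finSucc]
          refine expect_congr rfl fun b _ => ?_
          rw [mul_expect]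
          refine expect_congr rfl fun π _ => ?_
          rw [← Real.exp_add]
          ring_nf
      _ ≤ 𝔼 b, exp (l * (g b - 𝔼 b', g b')) * exp (n * K ^ 2 * l ^ 2 / 2) :=
          expect_le_expect fun b _ => mul_le_mul_of_nonneg_left (hfiber b) (exp_pos _).le
      _ = (𝔼 b, exp (l * (g b - 𝔼 b', g b'))) * exp (n * K ^ 2 * l ^ 2 / 2) :=
          (expect_mul _ _ _).symm
      _ ≤ exp (K ^ 2 * l ^ 2 / 2) * exp (n * K ^ 2 * l ^ 2 / 2) := by gcongr
      _ = exp ((n + 1 : ℕ) * K ^ 2 * l ^ 2 / 2) := by rw [← Real.exp_add]; push_cast; ring_nf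

lemma hasSubgaussianMGF_sub_expect_of_lipschitz [MeasurableSpace (Fin n ↪ β)] [MeasurableSingletonClass (Fin n ↪ β)]
    {f : (Fin n ↪ β) → ℝ} {K : ℝ≥0} (hf : ∀ π₁ π₂, |f π₁ - f π₂| ≤ K * hammingDist ⇑π₁ ⇑π₂) :
    HasSubgaussianMGF (fun π => f π - 𝔼 σ, f σ) (n * K ^ 2) (uniformOn Set.univ) :=
  hasSubgaussianMGF_uniformOn_univ_iff.2 fun l => by
    simpa using expect_exp_mul_sub_expect_le_of_lipschitz hf l

lemma measureReal_le_norm_sub_expect_le [MeasurableSpace (Fin n ↪ β)] [MeasurableSingletonClass (Fin n ↪ β)]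
    {F : (Fin n ↪ β) → ℂ} {K : ℝ≥0} (hF : ∀ π₁ π₂, ‖F π₁ - F π₂‖ ≤ K * hammingDist ⇑π₁ ⇑π₂)
    {t : ℝ} (ht : 0 ≤ t) :
    (uniformOn Set.univ).real {π | t ≤ ‖F π - 𝔼 σ, F σ‖} ≤
      4 * exp (-t ^ 2 / (4 * (n * K ^ 2))) := by
  have hre := hasSubgaussianMGF_sub_expect_of_lipschitz (f := fun π => (F π).re) (K := K)
    fun π₁ π₂ => by rw [← Complex.sub_re]; exact (Complex.abs_re_le_norm _).trans (hF _ _)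
  have him := hasSubgaussianMGF_sub_expect_of_lipschitz (f := fun π => (F π).im) (K := K)
    fun π₁ π₂ => by rw [← Complex.sub_im]; exact (Complex.abs_im_le_norm _).trans (hF _ _)
  simp_rw [← Complex.re_expect, ← Complex.sub_re] at hre
  simp_rw [← Complex.im_expect, ← Complex.sub_im] at him
  simpa using measureReal_le_norm_le_of_hasSubgaussianMGF hre him ht

end Embedding

theorem stmt3_general (M A : ℕ)
    (F : (Fin A ↪ Fin M) → ℂ) (K : ℝ) (hK : 0 < K)
    (hLip : ∀ π₁ π₂ : Fin A ↪ Fin M, π₁ ≠ π₂ →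
      ‖F π₁ - F π₂‖ ≤
        K * ((Finset.univ.filter (fun j : Fin A => π₁ j ≠ π₂ j)).card : ℝ))
    (t : ℝ) (ht : 0 < t) :
    ((Finset.univ.filter (fun π : Fin A ↪ Fin M =>
        t ≤ ‖F π -
          (∑ σ : Fin A ↪ Fin M, F σ) / (Fintype.card (Fin A ↪ Fin M) : ℂ)‖)).card : ℝ) /
      (Fintype.card (Fin A ↪ Fin M) : ℝ) ≤ 2 * Real.exp (-t ^ 2 / (16 * A * K ^ 2)) := by
  let _ : MeasurableSpace (Fin A ↪ Fin M) := ⊤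
  have hF : ∀ π₁ π₂ : Fin A ↪ Fin M,
      ‖F π₁ - F π₂‖ ≤ K.toNNReal * hammingDist ⇑π₁ ⇑π₂ := fun π₁ π₂ => by
    rw [Real.coe_toNNReal _ hK.le]
    rcases eq_or_ne π₁ π₂ with rfl | hne
    · simp
    · exact hLip π₁ π₂ hne
  rw [← card_univ, ← expect_eq_sum_div_card, card_univ, ← measureReal_uniformOn_univ]
  have htail := measureReal_le_norm_sub_expect_le hF ht.le
  rw [Real.coe_toNNReal _ hK.le, neg_div] at htail
  calc _ ≤ 2 * exp (-(t ^ 2 / (4 * (A * K ^ 2))) / 4) :=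
        le_two_mul_exp_neg_div_four measureReal_le_one htail
    _ = 2 * exp (-t ^ 2 / (16 * A * K ^ 2)) := by ring_nf

/-- Theorem 2.5, concentration of measure in the space of permutations
`Π(M,A)`, i.e. injective maps `{0,…,A-1} → {0,…,M-1}`, modelled as `Fin A ↪ Fin M`:
for any `F : Π(M,A) → ℂ` with Lipschitz constant `K > 0` (for the Hamming metric `d^p`)
and any `t > 0`, `μ^p({π : |F(π) - 𝔼^p(F)| ≥ t}) ≤ 2 exp(-t²/(16 A K²))`. -/
theorem stmt3 (M A : ℕ) (hM : 3 ≤ M) (hA1 : 1 < A) (hA2 : A < M)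
    (F : (Fin A ↪ Fin M) → ℂ) (K : ℝ) (hK : 0 < K)
    (hLip : ∀ π₁ π₂ : Fin A ↪ Fin M, π₁ ≠ π₂ →
      ‖F π₁ - F π₂‖ ≤
        K * ((Finset.univ.filter (fun j : Fin A => π₁ j ≠ π₂ j)).card : ℝ))
    (t : ℝ) (ht : 0 < t) :
    ((Finset.univ.filter (fun π : Fin A ↪ Fin M =>
        t ≤ ‖F π -
          (∑ σ : Fin A ↪ Fin M, F σ) / (Fintype.card (Fin A ↪ Fin M) : ℂ)‖)).card : ℝ) /
      (Fintype.card (Fin A ↪ Fin M) : ℝ) ≤ 2 * Real.exp (-t ^ 2 / (16 * A * K ^ 2)) :=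
  stmt3_general M A F K hK hLip t ht
end

section
/- Let (X,d) be a finite nonempty metric space, and suppose there exist n ∈ ℕ, positive real numbers a_1,...,a_n, and a sequence 𝒳⁰, 𝒳¹, ..., 𝒳ⁿ of partitions of X such that: 𝒳⁰ = {X}; 𝒳ⁿ consists of all singletons of X; each 𝒳ᵏ refines 𝒳ᵏ⁻¹ for k = 1,...,n; and for every k = 1,...,n and every pair of cells Ω_p, Ω_q of 𝒳ᵏ contained in the same cell of 𝒳ᵏ⁻¹, there exists a bijection φ : Ω_p → Ω_q with d(x, φ(x)) ≤ a_k for all x ∈ Ω_p. Set l = (∑_{k=1}^n a_k²)^{1/2}. Let μ be the uniform counting probability measure on X. Then for any F : X → ℂ with ‖F‖_Lip > 0 and any t > 0, μ({x ∈ X : |F(x) − 𝔼(F)| ≥ t}) ≤ 2·exp(−t²/(4·l²·‖F‖²_Lip)). -/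
/-!
The averages `f k = 𝔼(F | 𝒳ᵏ)` form a martingale from the constant `𝔼 F` to `F`. The bijections
between sibling cells show that `f k` oscillates by at most `K a_k` on every cell of `𝒳ᵏ⁻¹`, on
which `f (k-1)` is the mean of `f k`. Convexity of `s ↦ cosh √s` gives Pinelis' estimate: if the
increments `d` have mean zero on a cell and `‖d‖ ≤ c`, the cell average of `cosh (λ ‖z + d‖)` is at
most `cosh (λ ‖z‖) cosh (λ c)`. Iterating, `∑ₓ cosh (λ ‖F x - 𝔼 F‖) ≤ |X| exp (λ² K² l² / 2)`, and
the Chernoff bound with `λ = t / (K² l²)` yields the tail estimate.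
-/

open Finset Real
open scoped BigOperators InnerProductSpace NNReal

namespace Real

lemma hasSum_cosh_sqrt {s : ℝ} (hs : 0 ≤ s) :
    HasSum (fun n : ℕ => s ^ n / (2 * n).factorial) (cosh √s) := by
  simpa [pow_mul, sq_sqrt hs] using hasSum_cosh √s

lemma convexOn_cosh_sqrt : ConvexOn ℝ (Set.Ici 0) fun s : ℝ => cosh √s := by
  refine ⟨convex_Ici 0, fun x hx y hy α β hα hβ hab => ?_⟩
  have hx₀ : 0 ≤ x := hx
  have hy₀ : 0 ≤ y := hy
  refine hasSum_le (fun n => ?_) (hasSum_cosh_sqrt (by positivity))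
    (((hasSum_cosh_sqrt hx₀).mul_left α).add ((hasSum_cosh_sqrt hy₀).mul_left β))
  have hpow := (convexOn_pow n).2 hx hy hα hβ hab
  simp only [smul_eq_mul] at hpow ⊢
  rw [mul_div_assoc', mul_div_assoc', ← add_div]
  gcongr

/-- Convexity of `s ↦ cosh √s` between `(p - q)²` and `(p + q)²`, with weights `(1 ∓ ρ) / 2`. -/
lemma cosh_le_of_sq_le {x p q ρ : ℝ} (hρ : |ρ| ≤ 1) (hx : x ^ 2 ≤ p ^ 2 + q ^ 2 + 2 * p * q * ρ) :
    cosh x ≤ cosh p * cosh q + ρ * (sinh p * sinh q) := by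
  obtain ⟨hρ₁, hρ₂⟩ := abs_le.1 hρ
  have hconv := convexOn_cosh_sqrt.2 (Set.mem_Ici.2 (sq_nonneg (p - q)))
    (Set.mem_Ici.2 (sq_nonneg (p + q))) (by linarith : 0 ≤ (1 - ρ) / 2)
    (by linarith : 0 ≤ (1 + ρ) / 2) (by ring)
  simp only [smul_eq_mul, sqrt_sq_eq_abs, cosh_abs, cosh_sub, cosh_add] at hconv
  calc cosh x = cosh √(x ^ 2) := by rw [sqrt_sq_eq_abs, cosh_abs]
    _ ≤ cosh √((1 - ρ) / 2 * (p - q) ^ 2 + (1 + ρ) / 2 * (p + q) ^ 2) := by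
      rw [cosh_le_cosh, abs_of_nonneg (sqrt_nonneg _), abs_of_nonneg (sqrt_nonneg _)]
      exact sqrt_le_sqrt (by linarith)
    _ ≤ cosh p * cosh q + ρ * (sinh p * sinh q) := hconv.trans_eq (by ring)

lemma prod_cosh_le_exp_sum_sq {ι : Type*} (s : Finset ι) (x : ι → ℝ) :
    ∏ i ∈ s, cosh (x i) ≤ exp ((∑ i ∈ s, x i ^ 2) / 2) := by
  rw [sum_div, exp_sum]
  exact prod_le_prod (fun i _ => (cosh_pos _).le) fun i _ => cosh_le_exp_half_sq _

end Real

lemma le_mul_prod_Icc_of_le_mul {u b : ℕ → ℝ} {n : ℕ} (hb : ∀ k, 1 ≤ k → k ≤ n → 0 ≤ b k)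
    (h : ∀ k, 1 ≤ k → k ≤ n → u k ≤ u (k - 1) * b k) :
    u n ≤ u 0 * ∏ k ∈ Icc 1 n, b k := by
  induction n with
  | zero => simp
  | succ n ih =>
    rw [prod_Icc_succ_top (by omega), ← mul_assoc]
    calc u (n + 1) ≤ u n * b (n + 1) := h (n + 1) (by omega) le_rfl
      _ ≤ (u 0 * ∏ k ∈ Icc 1 n, b k) * b (n + 1) := by
        gcongr
        · exact hb (n + 1) (by omega) le_rfl
        · exact ih (fun k hk₁ hk₂ => hb k hk₁ (by omega)) fun k hk₁ hk₂ => h k hk₁ (by omega)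

section InnerProductSpace

variable {E : Type*} [NormedAddCommGroup E] [InnerProductSpace ℝ E]

lemma cosh_mul_norm_add_le (lam c : ℝ) (z d : E) (hd : ‖d‖ ≤ c) :
    cosh (lam * ‖z + d‖) ≤ cosh (lam * ‖z‖) * cosh (lam * c) +
      ⟪z, d⟫_ℝ / (‖z‖ * c) * (sinh (lam * ‖z‖) * sinh (lam * c)) := by
  have hinner : |⟪z, d⟫_ℝ| ≤ ‖z‖ * c :=
    (abs_real_inner_le_norm z d).trans (mul_le_mul_of_nonneg_left hd (norm_nonneg z))
  have hρ : |⟪z, d⟫_ℝ / (‖z‖ * c)| ≤ 1 := by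
    rw [abs_div]
    exact div_le_one_of_le₀ (hinner.trans (le_abs_self _)) (abs_nonneg _)
  -- also when `‖z‖ * c = 0`: then the quotient is the junk value `0`, and so is `⟪z, d⟫_ℝ`
  have hmul : ‖z‖ * c * (⟪z, d⟫_ℝ / (‖z‖ * c)) = ⟪z, d⟫_ℝ := by
    rcases eq_or_ne (‖z‖ * c) 0 with h | h
    · rw [h, zero_mul, eq_comm, ← abs_nonpos_iff, ← h]
      exact hinner
    · exact mul_div_cancel₀ _ h
  generalize ⟪z, d⟫_ℝ / (‖z‖ * c) = ρ at hρ hmul ⊢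
  refine cosh_le_of_sq_le hρ ?_
  have hd₂ : ‖d‖ ^ 2 ≤ c ^ 2 := pow_le_pow_left₀ (norm_nonneg d) hd 2
  calc (lam * ‖z + d‖) ^ 2 = lam ^ 2 * (‖z‖ ^ 2 + 2 * ⟪z, d⟫_ℝ + ‖d‖ ^ 2) := by
        rw [mul_pow, norm_add_sq_real]
    _ ≤ lam ^ 2 * (‖z‖ ^ 2 + 2 * ⟪z, d⟫_ℝ + c ^ 2) := by gcongr
    _ = _ := by linear_combination (-2 * lam ^ 2) * hmul

lemma sum_cosh_mul_norm_add_le {ι : Type*} (s : Finset ι) (lam c : ℝ) (z : E) (d : ι → E)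
    (hd : ∀ i ∈ s, ‖d i‖ ≤ c) (hsum : ∑ i ∈ s, d i = 0) :
    ∑ i ∈ s, cosh (lam * ‖z + d i‖) ≤ #s * (cosh (lam * ‖z‖) * cosh (lam * c)) := by
  calc ∑ i ∈ s, cosh (lam * ‖z + d i‖)
      ≤ ∑ i ∈ s, (cosh (lam * ‖z‖) * cosh (lam * c) +
          ⟪z, d i⟫_ℝ / (‖z‖ * c) * (sinh (lam * ‖z‖) * sinh (lam * c))) :=
        sum_le_sum fun i hi => cosh_mul_norm_add_le lam c z (d i) (hd i hi)
    _ = #s * (cosh (lam * ‖z‖) * cosh (lam * c)) := by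
      rw [sum_add_distrib, ← sum_mul, ← sum_mul, ← sum_div, ← inner_sum, hsum, inner_zero_right, zero_div,
        zero_mul, add_zero, sum_const, nsmul_eq_mul, mul_assoc]

end InnerProductSpace

lemma norm_sub_expect_le {ι : Type*} {s : Finset ι} (hs : s.Nonempty) {g : ι → ℂ} {x : ι} {c : ℝ}
    (h : ∀ y ∈ s, ‖g x - g y‖ ≤ c) : ‖g x - (𝔼 y ∈ s, g y)‖ ≤ c := by
  rw [← expect_const hs (g x), ← expect_sub_distrib]
  exact (RCLike.norm_expect_le (K := ℝ)).trans (expect_le hs h)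

lemma norm_expect_sub_expect_le_of_bijOn {X : Type*} [PseudoMetricSpace X] {F : X → ℂ} {K : ℝ≥0}
    (hF : LipschitzWith K F) {p q : Finset X} (hp : p.Nonempty) {φ : X → X}
    (hφ : Set.BijOn φ p q) {a : ℝ} (hφa : ∀ x ∈ p, dist x (φ x) ≤ a) :
    ‖(𝔼 x ∈ p, F x) - 𝔼 x ∈ q, F x‖ ≤ K * a := by
  rw [← expect_nbij φ (fun x hx => hφ.mapsTo hx) (fun _ _ => rfl) hφ.injOn hφ.surjOn,
    ← expect_sub_distrib]
  refine (RCLike.norm_expect_le (K := ℝ)).trans (expect_le hp fun x hx => ?_)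
  rw [← dist_eq_norm]
  exact (hF.dist_le_mul x (φ x)).trans (by gcongr; exact hφa x hx)

namespace Finpartition

variable {α M : Type*} [Fintype α] [DecidableEq α] (P Q : Finpartition (univ : Finset α))

def condExpect [AddCommMonoid M] [Module ℚ≥0 M] (f : α → M) (x : α) : M :=
  𝔼 y ∈ P.part x, f y

lemma part_mem_parts (x : α) : P.part x ∈ P.parts := P.part_mem.2 (mem_univ x)

lemma part_subset_part_of_le (h : P ≤ Q) (x : α) : P.part x ⊆ Q.part x := by
  obtain ⟨q, hq, hpq⟩ := h (P.part_mem_parts x)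
  rwa [Q.part_eq_of_mem hq (hpq (P.mem_part (mem_univ x)))]

lemma sum_image_part [AddCommMonoid M] {r : Finset α} (hr : ∀ x ∈ r, P.part x ⊆ r) (g : α → M) :
    ∑ t ∈ r.image P.part, ∑ y ∈ t, g y = ∑ x ∈ r, g x := by
  refine sum_image' g fun x hx => sum_congr ?_ fun _ _ => rfl
  ext y
  simp only [mem_filter]
  constructor
  · intro hy
    exact ⟨hr x hx hy, P.part_eq_of_mem (P.part_mem_parts x) hy⟩
  · rintro ⟨-, hy⟩
    exact hy ▸ P.mem_part (mem_univ y)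

variable [AddCommMonoid M] [Module ℚ≥0 M]

lemma condExpect_eq_of_mem {t : Finset α} (ht : t ∈ P.parts) {x : α} (hx : x ∈ t) (f : α → M) :
    P.condExpect f x = 𝔼 y ∈ t, f y := by
  rw [condExpect, P.part_eq_of_mem ht hx]

lemma sum_condExpect_of_part_subset {r : Finset α} (hr : ∀ x ∈ r, P.part x ⊆ r) (f : α → M) :
    ∑ x ∈ r, P.condExpect f x = ∑ x ∈ r, f x := by
  rw [← P.sum_image_part hr, ← P.sum_image_part hr]
  refine sum_congr rfl fun t ht => ?_
  obtain ⟨x, -, rfl⟩ := mem_image.1 ht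
  rw [sum_congr rfl fun y hy => P.condExpect_eq_of_mem (P.part_mem_parts x) hy f, sum_const,
    card_smul_expect]

lemma condExpect_condExpect_of_le (h : P ≤ Q) (f : α → M) :
    Q.condExpect (P.condExpect f) = Q.condExpect f := by
  ext x
  have hr : ∀ y ∈ Q.part x, P.part y ⊆ Q.part x := fun y hy =>
    Q.part_eq_of_mem (Q.part_mem_parts x) hy ▸ P.part_subset_part_of_le Q h y
  change 𝔼 y ∈ Q.part x, P.condExpect f y = 𝔼 y ∈ Q.part x, f y
  unfold Finset.expect
  rw [P.sum_condExpect_of_part_subset hr]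

lemma condExpect_of_parts_eq_singleton_univ (h : P.parts = {univ}) (f : α → M) (x : α) :
    P.condExpect f x = 𝔼 y, f y :=
  P.condExpect_eq_of_mem (by simp [h]) (mem_univ x) f

lemma condExpect_of_parts_singletons (h : ∀ p ∈ P.parts, ∃ x, p = {x}) (f : α → M) (x : α) :
    P.condExpect f x = f x := by
  obtain ⟨y, hy⟩ := h _ (P.part_mem_parts x)
  have hxy : x = y := mem_singleton.1 (hy ▸ P.mem_part (mem_univ x))
  rw [condExpect, hy, ← hxy, expect_singleton]

end Finpartition

namespace Finpartition

variable {X : Type*} [Fintype X] [DecidableEq X]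

lemma norm_condExpect_sub_condExpect_le [PseudoMetricSpace X] {P Q : Finpartition (univ : Finset X)} (hPQ : P ≤ Q)
    {F : X → ℂ} {K : ℝ≥0} (hF : LipschitzWith K F) {a : ℝ}
    (hbij : ∀ r ∈ Q.parts, ∀ p ∈ P.parts, ∀ q ∈ P.parts, p ⊆ r → q ⊆ r →
      ∃ φ : X → X, Set.BijOn φ ↑p ↑q ∧ ∀ x ∈ p, dist x (φ x) ≤ a)
    {r : Finset X} (hr : r ∈ Q.parts) {x y : X} (hx : x ∈ r) (hy : y ∈ r) :
    ‖P.condExpect F x - P.condExpect F y‖ ≤ K * a := by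
  have hsub : ∀ z ∈ r, P.part z ⊆ r := fun z hz =>
    Q.part_eq_of_mem hr hz ▸ P.part_subset_part_of_le Q hPQ z
  obtain ⟨φ, hφ, hφa⟩ :=
    hbij r hr _ (P.part_mem_parts x) _ (P.part_mem_parts y) (hsub x hx) (hsub y hy)
  exact norm_expect_sub_expect_le_of_bijOn hF ⟨x, P.mem_part (mem_univ x)⟩ hφ hφa

lemma sum_cosh_mul_norm_sub_le (Q : Finpartition (univ : Finset X)) (g : X → ℂ) (m : ℂ)
    (lam c : ℝ) (hg : ∀ r ∈ Q.parts, ∀ x ∈ r, ∀ y ∈ r, ‖g x - g y‖ ≤ c) :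
    ∑ x, cosh (lam * ‖g x - m‖) ≤
      (∑ x, cosh (lam * ‖Q.condExpect g x - m‖)) * cosh (lam * c) := by
  have huniv : ∀ x ∈ (univ : Finset X), Q.part x ⊆ univ := fun _ _ => subset_univ _
  rw [← Q.sum_image_part huniv, ← Q.sum_image_part huniv, sum_mul]
  refine sum_le_sum fun t ht => ?_
  obtain ⟨x₀, -, rfl⟩ := mem_image.1 ht
  set μ := 𝔼 y ∈ Q.part x₀, g y
  have hd : ∀ y ∈ Q.part x₀, ‖g y - μ‖ ≤ c := fun y hy =>
    norm_sub_expect_le ⟨x₀, Q.mem_part (mem_univ x₀)⟩ (hg _ (Q.part_mem_parts x₀) y hy)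
  have hsum : ∑ y ∈ Q.part x₀, (g y - μ) = 0 := by
    rw [sum_sub_distrib, sum_const, card_smul_expect, sub_self]
  have hcond : ∀ y ∈ Q.part x₀, cosh (lam * ‖Q.condExpect g y - m‖) = cosh (lam * ‖μ - m‖) :=
    fun y hy => by rw [Q.condExpect_eq_of_mem (Q.part_mem_parts x₀) hy g]
  calc ∑ y ∈ Q.part x₀, cosh (lam * ‖g y - m‖)
      = ∑ y ∈ Q.part x₀, cosh (lam * ‖(μ - m) + (g y - μ)‖) := by simp_rw [sub_add_sub_cancel']
    _ ≤ #(Q.part x₀) * (cosh (lam * ‖μ - m‖) * cosh (lam * c)) :=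
      sum_cosh_mul_norm_add_le _ lam c _ _ hd hsum
    _ = (∑ y ∈ Q.part x₀, cosh (lam * ‖Q.condExpect g y - m‖)) * cosh (lam * c) := by
      rw [sum_congr rfl hcond, sum_const, nsmul_eq_mul, mul_assoc]

end Finpartition

lemma sum_cosh_mul_norm_sub_expect_le {X : Type*} [PseudoMetricSpace X] [Fintype X]
    [DecidableEq X] (n : ℕ) (a : ℕ → ℝ) (𝒳 : ℕ → Finpartition (univ : Finset X))
    (h0 : (𝒳 0).parts = {univ}) (hn : ∀ p ∈ (𝒳 n).parts, ∃ x : X, p = {x})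
    (href : ∀ k, 1 ≤ k → k ≤ n → 𝒳 k ≤ 𝒳 (k - 1))
    (hbij : ∀ k, 1 ≤ k → k ≤ n → ∀ r ∈ (𝒳 (k - 1)).parts,
      ∀ p ∈ (𝒳 k).parts, ∀ q ∈ (𝒳 k).parts, p ⊆ r → q ⊆ r →
        ∃ φ : X → X, Set.BijOn φ ↑p ↑q ∧ ∀ x ∈ p, dist x (φ x) ≤ a k)
    {F : X → ℂ} {K : ℝ≥0} (hF : LipschitzWith K F) (lam : ℝ) :
    ∑ x, cosh (lam * ‖F x - 𝔼 y, F y‖) ≤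
      Fintype.card X * exp (lam ^ 2 * (K ^ 2 * ∑ k ∈ Icc 1 n, a k ^ 2) / 2) := by
  set u : ℕ → ℝ := fun k => ∑ x, cosh (lam * ‖(𝒳 k).condExpect F x - 𝔼 y, F y‖)
  have hstep : ∀ k, 1 ≤ k → k ≤ n → u k ≤ u (k - 1) * cosh (lam * (K * a k)) := fun k hk₁ hk₂ => by
    have h := (𝒳 (k - 1)).sum_cosh_mul_norm_sub_le ((𝒳 k).condExpect F) (𝔼 y, F y) lam (K * a k)
      fun r hr x hx y hy =>
        Finpartition.norm_condExpect_sub_condExpect_le (href k hk₁ hk₂) hF (hbij k hk₁ hk₂) hr hx hy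
    rwa [Finpartition.condExpect_condExpect_of_le _ _ (href k hk₁ hk₂)] at h
  have hchain := le_mul_prod_Icc_of_le_mul (fun k _ _ => (cosh_pos _).le) hstep
  have hu₀ : u 0 = Fintype.card X := by
    simp [u, Finpartition.condExpect_of_parts_eq_singleton_univ _ h0]
  have hun : u n = ∑ x, cosh (lam * ‖F x - 𝔼 y, F y‖) := by
    simp only [u, Finpartition.condExpect_of_parts_singletons _ hn]
  calc ∑ x, cosh (lam * ‖F x - 𝔼 y, F y‖) = u n := hun.symm
    _ ≤ Fintype.card X * ∏ k ∈ Icc 1 n, cosh (lam * (K * a k)) := hu₀ ▸ hchain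
    _ ≤ Fintype.card X * exp ((∑ k ∈ Icc 1 n, (lam * (K * a k)) ^ 2) / 2) := by
      gcongr
      exact prod_cosh_le_exp_sum_sq _ _
    _ = Fintype.card X * exp (lam ^ 2 * (K ^ 2 * ∑ k ∈ Icc 1 n, a k ^ 2) / 2) := by
      simp_rw [mul_pow, mul_sum]

lemma card_filter_le_two_mul_exp_of_sum_cosh_le {ι : Type*} [Fintype ι] (h : ι → ℝ) {t σ N : ℝ}
    (ht : 0 ≤ t) (hσ : 0 < σ) (hmgf : ∀ lam, ∑ i, cosh (lam * h i) ≤ N * exp (lam ^ 2 * σ / 2)) :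
    (#{i | t ≤ h i} : ℝ) ≤ 2 * N * exp (-t ^ 2 / (2 * σ)) := by
  set lam := t / σ with hlam
  have hmarkov : (#{i | t ≤ h i} : ℝ) * cosh (lam * t) ≤ ∑ i, cosh (lam * h i) := by
    calc (#{i | t ≤ h i} : ℝ) * cosh (lam * t) = ∑ i with t ≤ h i, cosh (lam * t) := by
          rw [sum_const, nsmul_eq_mul]
      _ ≤ ∑ i with t ≤ h i, cosh (lam * h i) := sum_le_sum fun i hi => by
          rw [cosh_le_cosh, abs_mul, abs_mul, abs_of_nonneg ht]
          exact mul_le_mul_of_nonneg_left ((mem_filter.1 hi).2.trans (le_abs_self _)) (abs_nonneg _)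
      _ ≤ ∑ i, cosh (lam * h i) :=
          sum_le_sum_of_subset_of_nonneg (filter_subset _ _) fun i _ _ => (cosh_pos _).le
  have hexp : exp (lam * t) ≤ 2 * cosh (lam * t) := by
    rw [cosh_eq]
    linarith [exp_pos (-(lam * t))]
  have hopt : lam ^ 2 * σ / 2 - lam * t = -t ^ 2 / (2 * σ) := by
    rw [hlam]
    field_simp
    ring
  rw [← hopt, exp_sub, mul_div_assoc', le_div_iff₀ (exp_pos _)]
  calc (#{i | t ≤ h i} : ℝ) * exp (lam * t) ≤ 2 * ((#{i | t ≤ h i} : ℝ) * cosh (lam * t)) := by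
        nlinarith [(Nat.cast_nonneg _ : (0 : ℝ) ≤ #{i | t ≤ h i})]
    _ ≤ 2 * N * exp (lam ^ 2 * σ / 2) := by linarith [hmarkov.trans (hmgf lam)]

theorem stmt4_general (X : Type*) [MetricSpace X] [Fintype X] [DecidableEq X]
    (n : ℕ) (a : ℕ → ℝ)
    (𝒳 : ℕ → Finpartition (Finset.univ : Finset X))
    (h0 : (𝒳 0).parts = {Finset.univ})
    (hn : ∀ p ∈ (𝒳 n).parts, ∃ x : X, p = {x})
    (href : ∀ k, 1 ≤ k → k ≤ n → 𝒳 k ≤ 𝒳 (k - 1))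
    (hbij : ∀ k, 1 ≤ k → k ≤ n → ∀ r ∈ (𝒳 (k - 1)).parts,
      ∀ p ∈ (𝒳 k).parts, ∀ q ∈ (𝒳 k).parts, p ⊆ r → q ⊆ r →
        ∃ φ : X → X, Set.BijOn φ (↑p) (↑q) ∧ ∀ x ∈ p, dist x (φ x) ≤ a k)
    (l : ℝ) (hl : l = Real.sqrt (∑ k ∈ Finset.Icc 1 n, (a k) ^ 2))
    (F : X → ℂ) (K : ℝ) (hK : 0 < K)
    (hLip : ∀ x y : X, x ≠ y → ‖F x - F y‖ ≤ K * dist x y)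
    (t : ℝ) (ht : 0 < t) :
    ((Finset.univ.filter (fun x : X =>
        t ≤ ‖F x - (∑ y : X, F y) / (Fintype.card X : ℂ)‖)).card : ℝ) /
      (Fintype.card X : ℝ) ≤ 2 * Real.exp (-t ^ 2 / (4 * l ^ 2 * K ^ 2)) := by
  set L := ∑ k ∈ Icc 1 n, a k ^ 2
  have hL : 0 ≤ L := sum_nonneg fun k _ => sq_nonneg (a k)
  have hF : LipschitzWith ⟨K, hK.le⟩ F := LipschitzWith.of_dist_le_mul fun x y => by
    rcases eq_or_ne x y with rfl | hxy
    · simp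
    · rw [dist_eq_norm]
      exact hLip x y hxy
  rw [← card_univ, ← expect_eq_sum_div_card, hl, sq_sqrt hL]
  rcases hL.eq_or_lt with hL₀ | hL₀
  · rw [← hL₀, mul_zero, zero_mul, div_zero, exp_zero]
    exact (div_le_one_of_le₀ (mod_cast card_le_card (filter_subset _ _)) (Nat.cast_nonneg _)).trans
      (by norm_num)
  · have htail := card_filter_le_two_mul_exp_of_sum_cosh_le (fun x => ‖F x - 𝔼 y, F y‖) ht.le
      (by positivity : 0 < K ^ 2 * L) (sum_cosh_mul_norm_sub_expect_le n a 𝒳 h0 hn href hbij hF)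
    refine div_le_of_le_mul₀ (Nat.cast_nonneg _) (by positivity) (htail.trans ?_)
    rw [mul_right_comm]
    refine mul_le_mul_of_nonneg_right (mul_le_mul_of_nonneg_left (exp_le_exp.2 ?_) zero_le_two)
      (Nat.cast_nonneg _)
    rw [neg_div, neg_div, neg_le_neg_iff]
    exact div_le_div_of_nonneg_left (sq_nonneg t) (by positivity)
      (by nlinarith [mul_pos (pow_pos hK 2) hL₀])

/-- Theorem 2.4, concentration of measure in finite metric spaces:
if a finite metric space `X` has a chain of partitions `𝒳⁰ = {X}`, …, `𝒳ⁿ = {singletons}`,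
each refining the previous one, such that cells of `𝒳ᵏ` inside a common cell of `𝒳ᵏ⁻¹`
are related by bijections moving points at most `a_k`, and `l = (∑ a_k²)^{1/2}`, then every
`F : X → ℂ` with Lipschitz constant `K > 0` and any `t > 0` satisfy
`μ({x : |F(x) - 𝔼(F)| ≥ t}) ≤ 2 exp(-t²/(4 l² K²))`. -/
theorem stmt4 (X : Type*) [MetricSpace X] [Fintype X] [Nonempty X] [DecidableEq X]
    (n : ℕ) (a : ℕ → ℝ) (ha : ∀ k, 1 ≤ k → k ≤ n → 0 < a k)
    (𝒳 : ℕ → Finpartition (Finset.univ : Finset X))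
    (h0 : (𝒳 0).parts = {Finset.univ})
    (hn : ∀ p ∈ (𝒳 n).parts, ∃ x : X, p = {x})
    (href : ∀ k, 1 ≤ k → k ≤ n → 𝒳 k ≤ 𝒳 (k - 1))
    (hbij : ∀ k, 1 ≤ k → k ≤ n → ∀ r ∈ (𝒳 (k - 1)).parts,
      ∀ p ∈ (𝒳 k).parts, ∀ q ∈ (𝒳 k).parts, p ⊆ r → q ⊆ r →
        ∃ φ : X → X, Set.BijOn φ (↑p) (↑q) ∧ ∀ x ∈ p, dist x (φ x) ≤ a k)
    (l : ℝ) (hl : l = Real.sqrt (∑ k ∈ Finset.Icc 1 n, (a k) ^ 2))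
    (F : X → ℂ) (K : ℝ) (hK : 0 < K)
    (hLip : ∀ x y : X, x ≠ y → ‖F x - F y‖ ≤ K * dist x y)
    (t : ℝ) (ht : 0 < t) :
    ((Finset.univ.filter (fun x : X =>
        t ≤ ‖F x - (∑ y : X, F y) / (Fintype.card X : ℂ)‖)).card : ℝ) /
      (Fintype.card X : ℝ) ≤ 2 * Real.exp (-t ^ 2 / (4 * l ^ 2 * K ^ 2)) :=
  stmt4_general X n a 𝒳 h0 hn href hbij l hl F K hK hLip t ht
end

section
/- Let M ∈ ℕ with M ≥ 3 and 𝒜 ⊆ {0,...,M−1}. Then for all k₁, k₂ ∈ ℕ with k₁, k₂ ≥ 1, the norms r_k = ‖1_{C_k(M,𝒜)} F_{M^k} 1_{C_k(M,𝒜)}‖_{ℓ²_{M^k}→ℓ²_{M^k}} satisfy the submultiplicativity property r_{k₁+k₂} ≤ r_{k₁}·r_{k₂}. -/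
open scoped BigOperators

/-!
Cooley–Tukey splitting. Let `B_k = 1_{C_k} F_{M^k} 1_{C_k}` and `N = M^(k₁+k₂)`; write a row index
as `j = M^k₂ * a + b` and a column index as `l = c + M^k₁ * d`. Since the Cantor set is defined
digitwise, `j ∈ C_{k₁+k₂}` iff `a ∈ C_{k₁}` and `b ∈ C_{k₂}` (likewise for `l`), and the phase of
`F_N` splits as `(F_N)_{jl} = (F_{M^k₁})_{ac} · e^{-2πi cb/N} · (F_{M^k₂})_{bd}`. After these
unitary reindexings `B_{k₁+k₂}` factors as `(B_{k₁} ⊗ 1) · D · (1 ⊗ B_{k₂})` with `D` diagonal and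
unimodular, and `‖B ⊗ 1‖, ‖1 ⊗ B‖ ≤ ‖B‖`.
-/

open Finset Matrix WithLp
open scoped Matrix.Norms.L2Operator Kronecker

namespace Matrix

variable {𝕜 : Type*} [RCLike 𝕜] {l m n o p : Type*} [Fintype l] [Fintype m] [Fintype n]
  [Fintype o] [Fintype p] [DecidableEq n] [DecidableEq o] [DecidableEq p]

lemma sum_norm_mulVec_sq_le (A : Matrix m n 𝕜) (x : n → 𝕜) :
    ∑ i, ‖(A *ᵥ x) i‖ ^ 2 ≤ ‖A‖ ^ 2 * ∑ j, ‖x j‖ ^ 2 := by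
  have h := A.l2_opNorm_mulVec (toLp 2 x)
  rw [← sq_le_sq₀ (norm_nonneg _) (by positivity), mul_pow] at h
  simpa [EuclideanSpace.norm_sq_eq] using h

lemma l2_opNorm_le_of_sum_sq_le (A : Matrix m n 𝕜) {C : ℝ} (hC : 0 ≤ C)
    (h : ∀ x : n → 𝕜, ∑ i, ‖(A *ᵥ x) i‖ ^ 2 ≤ C ^ 2 * ∑ j, ‖x j‖ ^ 2) : ‖A‖ ≤ C := by
  rw [l2_opNorm_def]
  refine ContinuousLinearMap.opNorm_le_bound _ hC fun x => ?_
  rw [← sq_le_sq₀ (norm_nonneg _) (by positivity), mul_pow]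
  simpa [EuclideanSpace.norm_sq_eq, toLpLin_apply] using h x

lemma l2_opNorm_submatrix_equiv_le (A : Matrix m n 𝕜) (e : l ≃ m) (f : o ≃ n) :
    ‖A.submatrix e f‖ ≤ ‖A‖ := by
  refine l2_opNorm_le_of_sum_sq_le _ (norm_nonneg A) fun x => ?_
  rw [submatrix_mulVec_equiv, ← f.symm.sum_comp (fun j => ‖x j‖ ^ 2)]
  simpa only [Function.comp_apply, e.sum_comp (fun i => ‖(A *ᵥ (x ∘ f.symm)) i‖ ^ 2)]
    using sum_norm_mulVec_sq_le A (x ∘ f.symm)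

lemma l2_opNorm_submatrix_equiv (A : Matrix m n 𝕜) (e : l ≃ m) (f : o ≃ n) :
    ‖A.submatrix e f‖ = ‖A‖ :=
  (l2_opNorm_submatrix_equiv_le A e f).antisymm <| by
    simpa using l2_opNorm_submatrix_equiv_le (A.submatrix e f) e.symm f.symm

omit [Fintype m] [DecidableEq n] [DecidableEq o] in
lemma kronecker_one_mulVec (A : Matrix m n 𝕜) (x : n × p → 𝕜) (i : m) (q : p) :
    ((A ⊗ₖ (1 : Matrix p p 𝕜)) *ᵥ x) (i, q) = (A *ᵥ fun j => x (j, q)) i := by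
  simp [mulVec, dotProduct, Fintype.sum_prod_type, one_apply]

lemma l2_opNorm_kronecker_one_le (A : Matrix m n 𝕜) :
    ‖A ⊗ₖ (1 : Matrix p p 𝕜)‖ ≤ ‖A‖ := by
  refine l2_opNorm_le_of_sum_sq_le _ (norm_nonneg A) fun x => ?_
  rw [Fintype.sum_prod_type_right, Fintype.sum_prod_type_right, Finset.mul_sum]
  simp only [kronecker_one_mulVec]
  exact Finset.sum_le_sum fun q _ => sum_norm_mulVec_sq_le A _

lemma l2_opNorm_one_kronecker_le (A : Matrix m n 𝕜) :
    ‖(1 : Matrix p p 𝕜) ⊗ₖ A‖ ≤ ‖A‖ := by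
  have : (1 : Matrix p p 𝕜) ⊗ₖ A =
      (A ⊗ₖ (1 : Matrix p p 𝕜)).submatrix (Equiv.prodComm p m) (Equiv.prodComm p n) := by
    ext ⟨a, b⟩ ⟨c, d⟩
    simp [mul_comm]
  rw [this, l2_opNorm_submatrix_equiv]
  exact l2_opNorm_kronecker_one_le A

end Matrix

lemma sum_fin_add_mul_pow (M : ℕ) {k k' : ℕ} (a : Fin (k + k') → ℕ) :
    ∑ i : Fin (k + k'), a i * M ^ (i : ℕ) =
      ∑ i : Fin k, a (Fin.castAdd k' i) * M ^ (i : ℕ) +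
        M ^ k * ∑ i : Fin k', a (Fin.natAdd k i) * M ^ (i : ℕ) := by
  simp only [Fin.sum_univ_add, Fin.val_castAdd, Fin.val_natAdd, pow_add, mul_sum]
  congr 1
  exact sum_congr rfl fun i _ => by ring

theorem discCantor_add (M k k' : ℕ) (A : Finset ℕ) :
    discCantor M (k + k') A =
      image₂ (fun b a => b + M ^ k * a) (discCantor M k A) (discCantor M k' A) := by
  ext n
  simp only [discCantor, mem_image₂, mem_image, Fintype.mem_piFinset]
  constructor
  · rintro ⟨a, ha, rfl⟩
    exact ⟨_, ⟨fun i => a (Fin.castAdd k' i), fun i => ha _, rfl⟩,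
      _, ⟨fun i => a (Fin.natAdd k i), fun i => ha _, rfl⟩, (sum_fin_add_mul_pow M a).symm⟩
  · rintro ⟨_, ⟨a, ha, rfl⟩, _, ⟨a', ha', rfl⟩, rfl⟩
    refine ⟨Fin.append a a', Fin.addCases (by simpa using ha) (by simpa using ha'), ?_⟩
    simp [sum_fin_add_mul_pow]

lemma sum_mul_pow_lt_pow {M k : ℕ} {a : Fin k → ℕ} (ha : ∀ i, a i < M) :
    ∑ i : Fin k, a i * M ^ (i : ℕ) < M ^ k := by
  induction k with
  | zero => simp
  | succ k ih =>
    rw [Fin.sum_univ_castSucc, pow_succ']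
    have hlow := ih fun i => ha (Fin.castSucc i)
    have htop : (a (Fin.last k) + 1) * M ^ k ≤ M * M ^ k := Nat.mul_le_mul_right _ (ha _)
    simp only [Fin.val_castSucc, Fin.val_last]
    linarith

lemma lt_of_mem_discCantor {M k n : ℕ} {𝒜 : Finset ℕ} (h𝒜 : 𝒜 ⊆ range M)
    (hn : n ∈ discCantor M k 𝒜) : n < M ^ k := by
  obtain ⟨a, ha, rfl⟩ := mem_image.mp hn
  exact sum_mul_pow_lt_pow fun i => mem_range.mp (h𝒜 (Fintype.mem_piFinset.mp ha i))

lemma add_pow_mul_mem_discCantor_iff {M k k' a b : ℕ} {𝒜 : Finset ℕ} (h𝒜 : 𝒜 ⊆ range M)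
    (hb : b < M ^ k) :
    b + M ^ k * a ∈ discCantor M (k + k') 𝒜 ↔ b ∈ discCantor M k 𝒜 ∧ a ∈ discCantor M k' 𝒜 := by
  rw [discCantor_add, mem_image₂]
  constructor
  · rintro ⟨b', hb', a', ha', h⟩
    have hpos : 0 < M ^ k := b.zero_le.trans_lt hb
    have h₁ := (Nat.div_mod_unique hpos).mpr ⟨h, lt_of_mem_discCantor h𝒜 hb'⟩
    have h₂ := (Nat.div_mod_unique (a := b + M ^ k * a) hpos).mpr ⟨rfl, hb⟩
    obtain ⟨rfl, rfl⟩ : b' = b ∧ a' = a := ⟨h₁.2.symm.trans h₂.2, h₁.1.symm.trans h₂.1⟩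
    exact ⟨hb', ha'⟩
  · rintro ⟨hb', ha'⟩
    exact ⟨b, hb', a, ha', rfl⟩

open Complex in
lemma exp_phase_add_mul_add_mul {P Q : ℕ} (hP : P ≠ 0) (hQ : Q ≠ 0) (a b c d : ℕ) :
    exp (-(2 * Real.pi * I * ((b + Q * a : ℕ) : ℂ) * ((c + P * d : ℕ) : ℂ)) / ((P * Q : ℕ) : ℂ)) =
      exp (-(2 * Real.pi * I * a * c) / P) *
        (exp (-(2 * Real.pi * I * c * b) / ((P * Q : ℕ) : ℂ)) *
          exp (-(2 * Real.pi * I * b * d) / Q)) := by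
  have hP' : (P : ℂ) ≠ 0 := Nat.cast_ne_zero.mpr hP
  have hQ' : (Q : ℂ) ≠ 0 := Nat.cast_ne_zero.mpr hQ
  have hphase : -(2 * Real.pi * I * ((b + Q * a : ℕ) : ℂ) * ((c + P * d : ℕ) : ℂ)) /
      ((P * Q : ℕ) : ℂ) =
      -(2 * Real.pi * I * a * c) / P + (-(2 * Real.pi * I * c * b) / ((P * Q : ℕ) : ℂ) +
        -(2 * Real.pi * I * b * d) / Q) + ((-(a * d : ℕ) : ℤ) : ℂ) * (2 * Real.pi * I) := by
    push_cast
    field_simp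
    ring
  simp only [hphase, exp_add, exp_int_mul_two_pi_mul_I, mul_one]

def finPowAddEquivHighLow (M k₁ k₂ : ℕ) : Fin (M ^ k₁) × Fin (M ^ k₂) ≃ Fin (M ^ (k₁ + k₂)) :=
  finProdFinEquiv.trans (finCongr (pow_add M k₁ k₂).symm)

def finPowAddEquivLowHigh (M k₁ k₂ : ℕ) : Fin (M ^ k₁) × Fin (M ^ k₂) ≃ Fin (M ^ (k₁ + k₂)) :=
  (Equiv.prodComm _ _).trans <| finProdFinEquiv.trans (finCongr (by rw [pow_add, mul_comm]))

@[simp] lemma val_finPowAddEquivHighLow (M k₁ k₂ : ℕ) (x : Fin (M ^ k₁) × Fin (M ^ k₂)) :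
    (finPowAddEquivHighLow M k₁ k₂ x : ℕ) = x.2 + M ^ k₂ * x.1 := rfl

@[simp] lemma val_finPowAddEquivLowHigh (M k₁ k₂ : ℕ) (x : Fin (M ^ k₁) × Fin (M ^ k₂)) :
    (finPowAddEquivLowHigh M k₁ k₂ x : ℕ) = x.1 + M ^ k₁ * x.2 := rfl

noncomputable def twiddle (M k₁ k₂ : ℕ) (x : Fin (M ^ k₁) × Fin (M ^ k₂)) : ℂ :=
  Complex.exp (-(2 * Real.pi * Complex.I * (x.1 : ℕ) * (x.2 : ℕ)) / (M ^ (k₁ + k₂) : ℕ))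

lemma norm_twiddle_le (M k₁ k₂ : ℕ) : ‖twiddle M k₁ k₂‖ ≤ 1 := by
  refine (pi_norm_le_iff_of_nonneg zero_le_one).mpr fun x => ?_
  have harg : -(2 * Real.pi * Complex.I * (x.1 : ℕ) * (x.2 : ℕ)) / (M ^ (k₁ + k₂) : ℕ) =
      ((-(2 * Real.pi * (x.1 : ℕ) * (x.2 : ℕ) / (M ^ (k₁ + k₂) : ℕ)) : ℝ) : ℂ) * Complex.I := by
    push_cast
    ring
  rw [twiddle, harg, Complex.norm_exp_ofReal_mul_I]

lemma dftMatrix_pow_add_apply (M k₁ k₂ : ℕ) (x y : Fin (M ^ k₁) × Fin (M ^ k₂)) :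
    dftMatrix (M ^ (k₁ + k₂)) (finPowAddEquivHighLow M k₁ k₂ x) (finPowAddEquivLowHigh M k₁ k₂ y) =
      dftMatrix (M ^ k₁) x.1 y.1 * (twiddle M k₁ k₂ (y.1, x.2) * dftMatrix (M ^ k₂) x.2 y.2) := by
  have hN : M ^ (k₁ + k₂) = M ^ k₁ * M ^ k₂ := pow_add M k₁ k₂
  have hsqrt : (1 / Real.sqrt (M ^ (k₁ + k₂) : ℕ) : ℝ) =
      (1 / Real.sqrt (M ^ k₁ : ℕ) : ℝ) * (1 / Real.sqrt (M ^ k₂ : ℕ) : ℝ) := by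
    rw [hN, Nat.cast_mul, Real.sqrt_mul (Nat.cast_nonneg _), one_div_mul_one_div]
  simp only [dftMatrix, twiddle, val_finPowAddEquivHighLow, val_finPowAddEquivLowHigh, hsqrt]
  rw [hN, exp_phase_add_mul_add_mul x.1.pos.ne' x.2.pos.ne']
  push_cast
  ring

lemma cantorOp_add_apply {M : ℕ} {𝒜 : Finset ℕ} (h𝒜 : 𝒜 ⊆ range M) (k₁ k₂ : ℕ)
    (x y : Fin (M ^ k₁) × Fin (M ^ k₂)) :
    cantorOp M (k₁ + k₂) 𝒜 (finPowAddEquivHighLow M k₁ k₂ x) (finPowAddEquivLowHigh M k₁ k₂ y) =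
      cantorOp M k₁ 𝒜 x.1 y.1 * (twiddle M k₁ k₂ (y.1, x.2) * cantorOp M k₂ 𝒜 x.2 y.2) := by
  have hrow := add_pow_mul_mem_discCantor_iff (k' := k₁) (a := x.1) h𝒜 x.2.isLt
  have hcol := add_pow_mul_mem_discCantor_iff (k' := k₂) (a := y.2) h𝒜 y.1.isLt
  rw [add_comm k₂ k₁] at hrow
  simp only [cantorOp, val_finPowAddEquivHighLow, val_finPowAddEquivLowHigh, hrow, hcol,
    dftMatrix_pow_add_apply]
  split_ifs <;> simp_all

theorem cantorOp_add_submatrix {M : ℕ} {𝒜 : Finset ℕ} (h𝒜 : 𝒜 ⊆ range M) (k₁ k₂ : ℕ) :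
    (cantorOp M (k₁ + k₂) 𝒜).submatrix (finPowAddEquivHighLow M k₁ k₂)
        (finPowAddEquivLowHigh M k₁ k₂) =
      cantorOp M k₁ 𝒜 ⊗ₖ 1 * diagonal (twiddle M k₁ k₂) * 1 ⊗ₖ cantorOp M k₂ 𝒜 := by
  ext ⟨a, b⟩ ⟨c, d⟩
  rw [submatrix_apply, cantorOp_add_apply h𝒜]
  simp [mul_apply, diagonal_apply, Fintype.sum_prod_type, one_apply, mul_assoc]

theorem norm_cantorOp_add_le {M : ℕ} {𝒜 : Finset ℕ} (h𝒜 : 𝒜 ⊆ range M) (k₁ k₂ : ℕ) :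
    ‖cantorOp M (k₁ + k₂) 𝒜‖ ≤ ‖cantorOp M k₁ 𝒜‖ * ‖cantorOp M k₂ 𝒜‖ :=
  calc ‖cantorOp M (k₁ + k₂) 𝒜‖
      = ‖cantorOp M k₁ 𝒜 ⊗ₖ 1 * diagonal (twiddle M k₁ k₂) * 1 ⊗ₖ cantorOp M k₂ 𝒜‖ := by
        rw [← cantorOp_add_submatrix h𝒜, l2_opNorm_submatrix_equiv]
    _ ≤ ‖cantorOp M k₁ 𝒜 ⊗ₖ 1‖ * ‖diagonal (twiddle M k₁ k₂)‖ * ‖1 ⊗ₖ cantorOp M k₂ 𝒜‖ :=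
        (l2_opNorm_mul _ _).trans <| by gcongr; exact l2_opNorm_mul _ _
    _ ≤ ‖cantorOp M k₁ 𝒜‖ * 1 * ‖cantorOp M k₂ 𝒜‖ := by
        gcongr
        · exact l2_opNorm_kronecker_one_le _
        · rw [l2_opNorm_diagonal]
          exact norm_twiddle_le M k₁ k₂
        · exact l2_opNorm_one_kronecker_le _
    _ = ‖cantorOp M k₁ 𝒜‖ * ‖cantorOp M k₂ 𝒜‖ := by rw [mul_one]

theorem stmt5_general (M : ℕ) (𝒜 : Finset ℕ) (h𝒜 : 𝒜 ⊆ Finset.range M)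
    (k₁ k₂ : ℕ) :
    rNorm M (k₁ + k₂) 𝒜 ≤ rNorm M k₁ 𝒜 * rNorm M k₂ 𝒜 :=
  norm_cantorOp_add_le h𝒜 k₁ k₂

/-- Proposition 3.1, submultiplicativity of Dyatlov–Jin:
`r_{k₁+k₂} ≤ r_{k₁} · r_{k₂}`. -/
theorem stmt5 (M : ℕ) (hM : 3 ≤ M) (𝒜 : Finset ℕ) (h𝒜 : 𝒜 ⊆ Finset.range M)
    (k₁ k₂ : ℕ) (hk₁ : 1 ≤ k₁) (hk₂ : 1 ≤ k₂) :
    rNorm M (k₁ + k₂) 𝒜 ≤ rNorm M k₁ 𝒜 * rNorm M k₂ 𝒜 :=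
  stmt5_general M 𝒜 h𝒜 k₁ k₂
end

section
/- Let M, A ∈ ℕ with M ≥ 3 and 1 < A < M, let L > 0, and let m ∈ ℤ be such that M does not divide m. Then there exists a subset 𝔊_{L,m} ⊆ 𝔄(M,A) with μ(𝔄(M,A) \ 𝔊_{L,m}) ≤ 2·exp(−L²/16) such that for all 𝒜 ∈ 𝔊_{L,m}, |∑_{l∈𝒜} e^{2πiml/M}| ≤ L·√A. -/
open scoped BigOperators

/-!
Write the sum as `∑_{l ∈ 𝒜} z l` with `z l = e^{2πiml/M}`: unit vectors with `∑_{l<M} z l = 0`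
because `M ∤ m`. Its real and imaginary parts are sums of centred weights in `[-1, 1]` over a
uniformly random `A`-subset, and sampling without replacement concentrates like independent
sampling: by induction on `a`, using `(a+1) S_{a+1}(R) = ∑_l e^{s w_l} S_a(R \ {l})` for
`S_a(R) = ∑_{|𝒜|=a} e^{s ∑_𝒜 w}` together with Hoeffding's lemma for the uniform distribution on
`R`, one gets `S_a(R) ≤ C(|R|, a) e^{s a w̄ + a s²/2}`, where `w̄` is the mean of `w` on `R`.
Chernoff's bound at level `L√A/2` then controls each of the four one-sided tails by `e^{-L²/8}`,
and `4 e^{-L²/8} ≤ 2 e^{-L²/16}` whenever the right-hand side is below `1`.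
-/

open Real Finset

theorem div_add_one_sub_div_div_add_one {a m : ℕ} (h : a ≤ m) :
    (a / m : ℝ) + (1 - a / m) / (m + 1) = (a + 1) / (m + 1) := by
  rcases Nat.eq_zero_or_pos m with rfl | hm
  · obtain rfl : a = 0 := by omega
    simp
  · field_simp
    ring

namespace Finset

open MeasureTheory ProbabilityTheory in
theorem sum_exp_mul_le_card_mul_exp {ι : Type*} (R : Finset ι) (hR : R.Nonempty)
    (u : ι → ℝ) (hu : ∀ i ∈ R, |u i| ≤ 1) (s : ℝ) :
    ∑ i ∈ R, exp (s * u i) ≤ #R * exp (s * (∑ i ∈ R, u i) / #R + s ^ 2 / 2) := by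
  let _ : MeasurableSpace R := ⊤
  have _ : Nonempty R := hR.to_subtype
  set μ := (PMF.uniformOfFintype R).toMeasure
  have hX : ∀ᵐ i ∂μ, u (i : R) ∈ Set.Icc (-1 : ℝ) 1 :=
    Filter.Eventually.of_forall fun i => abs_le.mp (hu i i.2)
  have hoeffding := (hasSubgaussianMGF_of_mem_Icc Measurable.of_discrete.aemeasurable hX).mgf_le s
  have hparam : ((‖(1 : ℝ) - -1‖₊ / 2) ^ 2 : NNReal) = 1 := by norm_num
  simp only [mgf, μ, PMF.integral_eq_sum, PMF.uniformOfFintype_apply, Fintype.card_coe,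
    ENNReal.toReal_inv, ENNReal.toReal_natCast, smul_eq_mul, hparam, NNReal.coe_one, one_mul,
    sum_coe_sort R fun i => (#R : ℝ)⁻¹ * u i, ← mul_sum] at hoeffding
  rw [sum_coe_sort R fun i => exp (s * (u i - _))] at hoeffding
  calc ∑ i ∈ R, exp (s * u i)
      = #R * exp (s * (∑ i ∈ R, u i) / #R) * ((#R : ℝ)⁻¹ * ∑ i ∈ R,
          exp (s * (u i - (#R : ℝ)⁻¹ * ∑ i ∈ R, u i))) := by
        simp only [mul_sub, exp_sub, ← sum_div]
        field_simp
    _ ≤ #R * exp (s * (∑ i ∈ R, u i) / #R) * exp (s ^ 2 / 2) := by gcongr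
    _ = _ := by rw [mul_assoc, ← exp_add]

variable {α : Type*} [DecidableEq α] (R : Finset α)

theorem succ_nsmul_sum_powersetCard_succ {β : Type*} [AddCommMonoid β] (a : ℕ) (f : Finset α → β) :
    (a + 1) • ∑ 𝒜 ∈ R.powersetCard (a + 1), f 𝒜 =
      ∑ l ∈ R, ∑ ℬ ∈ (R.erase l).powersetCard a, f (insert l ℬ) := by
  calc (a + 1) • ∑ 𝒜 ∈ R.powersetCard (a + 1), f 𝒜
      = ∑ 𝒜 ∈ R.powersetCard (a + 1), ∑ _l ∈ 𝒜, f 𝒜 := by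
        rw [smul_sum]
        refine sum_congr rfl fun 𝒜 h𝒜 => ?_
        rw [sum_const, (mem_powersetCard.1 h𝒜).2]
    _ = ∑ l ∈ R, ∑ 𝒜 ∈ R.powersetCard (a + 1) with l ∈ 𝒜, f 𝒜 :=
        sum_comm' fun 𝒜 l => by
          simp only [mem_filter, mem_powersetCard]
          exact ⟨fun h => ⟨⟨h.1, h.2⟩, h.1.1 h.2⟩, fun h => ⟨h.1.1, h.1.2⟩⟩
    _ = _ := by
        refine sum_congr rfl fun l hl => sum_nbij' (erase · l) (insert l) ?_ ?_ ?_ ?_ ?_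
        · intro 𝒜 h𝒜
          simp only [mem_filter, mem_powersetCard] at h𝒜 ⊢
          rw [card_erase_of_mem h𝒜.2, h𝒜.1.2]
          exact ⟨erase_subset_erase l h𝒜.1.1, rfl⟩
        · intro ℬ hℬ
          simp only [mem_filter, mem_powersetCard] at hℬ ⊢
          have hl' : l ∉ ℬ := fun h => notMem_erase l R (hℬ.1 h)
          rw [card_insert_of_notMem hl', hℬ.2]
          exact ⟨⟨insert_subset hl (hℬ.1.trans (erase_subset l R)), rfl⟩, mem_insert_self l ℬ⟩
        · intro 𝒜 h𝒜
          exact insert_erase (mem_filter.1 h𝒜).2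
        · intro ℬ hℬ
          exact erase_insert fun h => notMem_erase l R ((mem_powersetCard.1 hℬ).1 h)
        · intro 𝒜 h𝒜
          rw [insert_erase (mem_filter.1 h𝒜).2]

theorem succ_mul_sum_powersetCard_exp_sum (w : α → ℝ) (s : ℝ) (a : ℕ) :
    (a + 1) * ∑ 𝒜 ∈ R.powersetCard (a + 1), exp (s * ∑ l ∈ 𝒜, w l) =
      ∑ l ∈ R, exp (s * w l) * ∑ ℬ ∈ (R.erase l).powersetCard a, exp (s * ∑ x ∈ ℬ, w x) := by
  have h := succ_nsmul_sum_powersetCard_succ R a fun 𝒜 => exp (s * ∑ l ∈ 𝒜, w l)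
  rw [nsmul_eq_mul, Nat.cast_succ] at h
  rw [h]
  refine sum_congr rfl fun l _ => ?_
  rw [mul_sum]
  refine sum_congr rfl fun ℬ hℬ => ?_
  have hlℬ : l ∉ ℬ := fun h => notMem_erase l R ((mem_powersetCard.1 hℬ).1 h)
  rw [sum_insert hlℬ, mul_add, exp_add]

theorem sum_powersetCard_exp_mul_sum_le (w : α → ℝ) (s : ℝ) (a : ℕ) (hw : ∀ l ∈ R, |w l| ≤ 1) :
    ∑ 𝒜 ∈ R.powersetCard a, exp (s * ∑ l ∈ 𝒜, w l) ≤
      (#R).choose a * exp (s * a * (∑ l ∈ R, w l) / #R + a * s ^ 2 / 2) := by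
  induction a generalizing R with
  | zero => simp
  | succ a ih =>
    rcases lt_or_ge #R (a + 1) with hlt | hle
    · simp [powersetCard_eq_empty.2 hlt, Nat.choose_eq_zero_of_lt hlt]
    obtain ⟨m, hm⟩ : ∃ m, #R = m + 1 := ⟨#R - 1, by omega⟩
    set W := ∑ l ∈ R, w l with hW
    -- once `S_a(R.erase l)` is bounded by induction, `w l` is left with the weight `c`
    set c : ℝ := 1 - a / m
    have ham : a ≤ m := by omega
    have hc0 : 0 ≤ c := sub_nonneg.2 (div_le_one_of_le₀ (by exact_mod_cast ham) m.cast_nonneg)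
    have hc1 : c ≤ 1 := sub_le_self _ (by positivity)
    have hmean : s * a * W / m + a * s ^ 2 / 2 + (s * (c * W) / (m + 1) + s ^ 2 / 2) =
        s * (a + 1) * W / (m + 1) + (a + 1) * s ^ 2 / 2 := by
      linear_combination s * W * div_add_one_sub_div_div_add_one ham
    have hchoose : (m + 1 : ℝ) * m.choose a = (m + 1).choose (a + 1) * (a + 1) := by
      exact_mod_cast Nat.add_one_mul_choose_eq m a
    set K := m.choose a * exp (s * a * W / m + a * s ^ 2 / 2)
    refine le_of_mul_le_mul_left (a := (a + 1 : ℝ)) ?_ (by positivity)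
    calc (a + 1 : ℝ) * ∑ 𝒜 ∈ R.powersetCard (a + 1), exp (s * ∑ l ∈ 𝒜, w l)
        = ∑ l ∈ R, exp (s * w l) * ∑ ℬ ∈ (R.erase l).powersetCard a, exp (s * ∑ x ∈ ℬ, w x) :=
          succ_mul_sum_powersetCard_exp_sum R w s a
      _ ≤ ∑ l ∈ R, exp (s * w l) * (m.choose a * exp (s * a * (W - w l) / m + a * s ^ 2 / 2)) := by
          gcongr with l hl
          have hIH := ih (R.erase l) fun x hx => hw x (mem_of_mem_erase hx)
          rwa [card_erase_of_mem hl, hm, Nat.add_sub_cancel, sum_erase_eq_sub hl] at hIH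
      _ = K * ∑ l ∈ R, exp (s * (c * w l)) := by
          rw [mul_sum]
          refine sum_congr rfl fun l _ => ?_
          rw [mul_left_comm, mul_assoc, ← exp_add, mul_assoc, ← exp_add]
          congr 2
          ring
      _ ≤ K * (#R * exp (s * (∑ l ∈ R, c * w l) / #R + s ^ 2 / 2)) := by
          gcongr
          refine sum_exp_mul_le_card_mul_exp R (card_pos.1 (by omega)) _ (fun l hl => ?_) s
          rw [abs_mul, abs_of_nonneg hc0]
          exact mul_le_one₀ hc1 (abs_nonneg _) (hw l hl)
      _ = (a + 1) * ((#R).choose (a + 1) *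
            exp (s * (a + 1 : ℕ) * W / #R + (a + 1 : ℕ) * s ^ 2 / 2)) := by
          rw [← mul_sum, ← hW, hm]
          push_cast
          rw [← hmean, exp_add (s * a * W / m + a * s ^ 2 / 2)]
          linear_combination exp (s * a * W / m + a * s ^ 2 / 2) *
            exp (s * (c * W) / (m + 1) + s ^ 2 / 2) * hchoose

theorem card_filter_powersetCard_lt_sum_le (w : α → ℝ) (hw : ∀ l ∈ R, |w l| ≤ 1)
    (hW : ∑ l ∈ R, w l = 0) {a : ℕ} (ha : 0 < a) {t : ℝ} (ht : 0 ≤ t) :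
    (#{𝒜 ∈ R.powersetCard a | t < ∑ l ∈ 𝒜, w l} : ℝ) ≤
      (#R).choose a * exp (-t ^ 2 / (2 * a)) := by
  set s := t / a
  have hs : 0 ≤ s := by positivity
  have hmgf := sum_powersetCard_exp_mul_sum_le R w s a hw
  rw [hW, mul_zero, zero_div, zero_add] at hmgf
  have hmarkov : #{𝒜 ∈ R.powersetCard a | t < ∑ l ∈ 𝒜, w l} * exp (s * t) ≤
      ∑ 𝒜 ∈ R.powersetCard a, exp (s * ∑ l ∈ 𝒜, w l) := by
    rw [← nsmul_eq_mul, ← sum_const]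
    calc ∑ 𝒜 ∈ R.powersetCard a with t < ∑ l ∈ 𝒜, w l, exp (s * t)
        ≤ ∑ 𝒜 ∈ R.powersetCard a with t < ∑ l ∈ 𝒜, w l, exp (s * ∑ l ∈ 𝒜, w l) :=
          sum_le_sum fun 𝒜 h𝒜 => by gcongr; exact (mem_filter.1 h𝒜).2.le
      _ ≤ ∑ 𝒜 ∈ R.powersetCard a, exp (s * ∑ l ∈ 𝒜, w l) :=
          sum_le_sum_of_subset_of_nonneg (filter_subset _ _) fun _ _ _ => (exp_pos _).le
  have hexp : a * s ^ 2 / 2 - s * t = -t ^ 2 / (2 * a) := by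
    have : (a : ℝ) ≠ 0 := by positivity
    simp only [s]
    field_simp
    ring
  rw [← hexp, exp_sub, ← mul_div_assoc, le_div_iff₀ (exp_pos _)]
  exact hmarkov.trans hmgf

theorem card_filter_powersetCard_lt_abs_sum_le (w : α → ℝ) (hw : ∀ l ∈ R, |w l| ≤ 1)
    (hW : ∑ l ∈ R, w l = 0) {a : ℕ} (ha : 0 < a) {t : ℝ} (ht : 0 ≤ t) :
    (#{𝒜 ∈ R.powersetCard a | t < |∑ l ∈ 𝒜, w l|} : ℝ) ≤
      2 * ((#R).choose a * exp (-t ^ 2 / (2 * a))) := by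
  have hsplit : (#{𝒜 ∈ R.powersetCard a | t < |∑ l ∈ 𝒜, w l|} : ℝ) ≤
      #{𝒜 ∈ R.powersetCard a | t < ∑ l ∈ 𝒜, w l} +
        #{𝒜 ∈ R.powersetCard a | t < ∑ l ∈ 𝒜, -w l} := by
    rw [← Nat.cast_add, Nat.cast_le]
    simp only [sum_neg_distrib, lt_abs, filter_or]
    exact card_union_le _ _
  linarith [card_filter_powersetCard_lt_sum_le R w hw hW ha ht,
    card_filter_powersetCard_lt_sum_le R (fun l => -w l) (by simpa using hw) (by simp [hW]) ha ht]

theorem card_filter_powersetCard_lt_norm_sum_le (z : α → ℂ) (hz : ∀ l ∈ R, ‖z l‖ ≤ 1)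
    (hZ : ∑ l ∈ R, z l = 0) {a : ℕ} (ha : 0 < a) {t : ℝ} (ht : 0 ≤ t) :
    (#{𝒜 ∈ R.powersetCard a | 2 * t < ‖∑ l ∈ 𝒜, z l‖} : ℝ) ≤
      4 * ((#R).choose a * exp (-t ^ 2 / (2 * a))) := by
  have hsplit : (#{𝒜 ∈ R.powersetCard a | 2 * t < ‖∑ l ∈ 𝒜, z l‖} : ℝ) ≤
      #{𝒜 ∈ R.powersetCard a | t < |∑ l ∈ 𝒜, (z l).re|} +
        #{𝒜 ∈ R.powersetCard a | t < |∑ l ∈ 𝒜, (z l).im|} := by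
    rw [← Nat.cast_add, Nat.cast_le]
    refine (card_le_card fun 𝒜 h𝒜 => ?_).trans (card_union_le _ _)
    rw [← filter_or]
    simp only [mem_filter] at h𝒜 ⊢
    refine ⟨h𝒜.1, ?_⟩
    by_contra! hsmall
    have := Complex.norm_le_abs_re_add_abs_im (∑ l ∈ 𝒜, z l)
    rw [Complex.re_sum, Complex.im_sum] at this
    linarith [h𝒜.2, hsmall.1, hsmall.2]
  linarith [card_filter_powersetCard_lt_abs_sum_le R (fun l => (z l).re)
      (fun l hl => (Complex.abs_re_le_norm _).trans (hz l hl))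
      (by simp [← Complex.re_sum, hZ]) ha ht,
    card_filter_powersetCard_lt_abs_sum_le R (fun l => (z l).im)
      (fun l hl => (Complex.abs_im_le_norm _).trans (hz l hl))
      (by simp [← Complex.im_sum, hZ]) ha ht]

end Finset

theorem sum_range_exp_two_pi_I_mul_div_eq_zero {M : ℕ} {m : ℤ} (hm : ¬ (M : ℤ) ∣ m) :
    ∑ l ∈ range M, Complex.exp (2 * π * Complex.I * m * l / M) = 0 := by
  rcases M.eq_zero_or_pos with rfl | hM
  · simp
  have hζ := Complex.isPrimitiveRoot_exp M hM.ne'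
  let x := Complex.exp (2 * π * Complex.I / M) ^ m
  have hx1 : x ≠ 1 := fun h => hm ((hζ.zpow_eq_one_iff_dvd m).1 h)
  have hxM : x ^ M = 1 := by
    rw [← zpow_natCast, ← zpow_mul, mul_comm m, zpow_mul, zpow_natCast, hζ.pow_eq_one, one_zpow]
  have hterm (l : ℕ) : Complex.exp (2 * π * Complex.I * m * l / M) = x ^ l := by
    simp only [x]
    rw [← Complex.exp_int_mul, ← Complex.exp_nat_mul]
    congr 1
    ring
  rw [sum_congr rfl fun l _ => hterm l, geom_sum_eq hx1, hxM, sub_self, zero_div]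

theorem div_le_two_mul_of_le_of_le_four_mul_sq {x C e : ℝ} (hC : 0 ≤ C) (he : 0 ≤ e)
    (h1 : x ≤ C) (h4 : x ≤ 4 * (C * e ^ 2)) : x / C ≤ 2 * e := by
  refine div_le_of_le_mul₀ hC (by positivity) ?_
  rcases le_total 1 (2 * e) with he1 | he1
  · exact h1.trans (le_mul_of_one_le_left hC he1)
  · calc x ≤ 2 * e * (2 * e * C) := by linarith
      _ ≤ 2 * e * C := mul_le_of_le_one_left (by positivity) he1

theorem stmt6_general (M A : ℕ) (hA1 : 1 < A)
    (L : ℝ) (hL : 0 < L) (m : ℤ) (hm : ¬ (M : ℤ) ∣ m) :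
    ∃ G ⊆ alphabets M A,
      (((alphabets M A) \ G).card : ℝ) / ((alphabets M A).card : ℝ) ≤
        2 * Real.exp (-L ^ 2 / 16) ∧
      ∀ 𝒜 ∈ G,
        ‖∑ l ∈ 𝒜, Complex.exp (2 * Real.pi * Complex.I * m * l / M)‖ ≤
          L * Real.sqrt A := by
  set z : ℕ → ℂ := fun l => Complex.exp (2 * π * Complex.I * m * l / M)
  set t := L * √A / 2
  refine ⟨{𝒜 ∈ alphabets M A | ‖∑ l ∈ 𝒜, z l‖ ≤ 2 * t}, filter_subset _ _, ?_,
    fun 𝒜 h𝒜 => by simpa [t, mul_div_cancel₀] using (mem_filter.1 h𝒜).2⟩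
  have hnorm (l : ℕ) : ‖z l‖ ≤ 1 := by simp [z, Complex.norm_exp]
  have htail := card_filter_powersetCard_lt_norm_sum_le (range M) z (fun l _ => hnorm l)
    (sum_range_exp_two_pi_I_mul_div_eq_zero hm) (by omega : 0 < A) (by positivity : 0 ≤ t)
  have hexp : -t ^ 2 / (2 * A) = -L ^ 2 / 16 + -L ^ 2 / 16 := by
    have : (A : ℝ) ≠ 0 := by positivity
    simp only [t, div_pow, mul_pow, sq_sqrt A.cast_nonneg]
    field_simp
    ring
  rw [hexp, exp_add, ← sq, card_range, ← alphabets] at htail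
  have hcard : #(alphabets M A) = M.choose A := by simp [alphabets]
  rw [← filter_not, hcard]
  simp only [not_le]
  refine div_le_two_mul_of_le_of_le_four_mul_sq (by positivity) (exp_pos _).le ?_ htail
  exact_mod_cast hcard ▸ card_filter_le _ _

/-- Proposition 3.2, square-root cancellation of exponential sums for random
alphabets: for `L > 0` and `m ∈ ℤ` not divisible by `M`, outside a set of alphabets of
measure at most `2 e^{-L²/16}`, one has `|∑_{l ∈ 𝒜} e^{2πiml/M}| ≤ L √A`. -/
theorem stmt6 (M A : ℕ) (hM : 3 ≤ M) (hA1 : 1 < A) (hA2 : A < M)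
    (L : ℝ) (hL : 0 < L) (m : ℤ) (hm : ¬ (M : ℤ) ∣ m) :
    ∃ G ⊆ alphabets M A,
      (((alphabets M A) \ G).card : ℝ) / ((alphabets M A).card : ℝ) ≤
        2 * Real.exp (-L ^ 2 / 16) ∧
      ∀ 𝒜 ∈ G,
        ‖∑ l ∈ 𝒜, Complex.exp (2 * Real.pi * Complex.I * m * l / M)‖ ≤
          L * Real.sqrt A :=
  stmt6_general M A hA1 L hL m hm
end

section
/- Let M, A ∈ ℕ with M ≥ 3 and 1 ≤ A ≤ M, let 𝒜 ⊆ {0,...,M−1} be nonempty with Card(𝒜) = A, and let k ∈ ℕ with k ≥ 1. Then with N = M^k, the norm r_k = ‖1_{C_k(M,𝒜)} F_N 1_{C_k(M,𝒜)}‖_{ℓ²_N→ℓ²_N} satisfies r_k ≥ √(A^k/M^k) = N^{−(1−δ)/2} where δ = log A / log M; consequently the sharp exponent satisfies β^s(M,𝒜) ≤ (1−δ)/2. -/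
/-! Test the operator on the standard basis vector at a point `l` of the Cantor set `C`: the image is
the column `l` of `F_N` cut down to `C`, whose entries all have modulus `N^{-1/2}`, so its norm is
`√(#C / N) = √(A^k / M^k)`. Rewriting this as a power of `N` bounds every admissible exponent `β`. -/

open scoped BigOperators

/-- The sharp exponent `β^s(M,𝒜) = sup {β ≥ 0 : r_k ≤ N^{-β} for all k ≥ 1}`. -/
noncomputable def sharpExp (M : ℕ) (A : Finset ℕ) : ℝ :=
  sSup {β : ℝ | 0 ≤ β ∧ ∀ k : ℕ, 1 ≤ k → rNorm M k A ≤ ((M : ℝ) ^ k) ^ (-β)}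

lemma sum_digits_eq_finFunctionFinEquiv {M k : ℕ} (a : Fin k → ℕ) (ha : ∀ i, a i < M) :
    ∑ i : Fin k, a i * M ^ (i : ℕ) = finFunctionFinEquiv (fun i => (⟨a i, ha i⟩ : Fin M)) :=
  rfl

lemma norm_dftMatrix_apply (N : ℕ) (j l : Fin N) : ‖dftMatrix N j l‖ = 1 / Real.sqrt N := by
  have hphase : -(2 * Real.pi * Complex.I * ((j : ℕ) : ℂ) * ((l : ℕ) : ℂ)) / (N : ℂ)
      = ((-(2 * Real.pi * (j : ℕ) * (l : ℕ) / N) : ℝ) : ℂ) * Complex.I := by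
    push_cast
    ring
  rw [dftMatrix, hphase, norm_mul, Complex.norm_exp_ofReal_mul_I, mul_one, Complex.norm_real,
    Real.norm_of_nonneg (by positivity)]

lemma Matrix.sqrt_sum_norm_sq_le_l2_opNorm {𝕜 n : Type*} [RCLike 𝕜] [Fintype n] [DecidableEq n]
    (B : Matrix n n 𝕜) (l : n) :
    Real.sqrt (∑ j, ‖B j l‖ ^ 2) ≤ ‖Matrix.toEuclideanCLM (𝕜 := 𝕜) B‖ := by
  set T := Matrix.toEuclideanCLM (𝕜 := 𝕜) B
  set e := EuclideanSpace.single l (1 : 𝕜)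
  have hcol : T e = WithLp.toLp 2 (B.transpose l) :=
    congrArg (WithLp.toLp 2) (B.mulVec_single_one l)
  calc Real.sqrt (∑ j, ‖B j l‖ ^ 2) = ‖T e‖ := by rw [hcol, EuclideanSpace.norm_eq]; rfl
    _ ≤ ‖T‖ * ‖e‖ := T.le_opNorm e
    _ = ‖T‖ := by rw [PiLp.norm_single, norm_one, mul_one]

lemma rpow_neg_half_one_sub_log_div_log {a m : ℝ} (ha : 0 < a) (hm : 0 < m) (hm1 : m ≠ 1)
    (k : ℕ) : (m ^ k) ^ (-((1 - Real.log a / Real.log m) / 2)) = Real.sqrt (a ^ k / m ^ k) := by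
  have hlog : Real.log m ≠ 0 := Real.log_ne_zero_of_pos_of_ne_one hm hm1
  rw [Real.sqrt_eq_rpow, Real.rpow_def_of_pos (by positivity), Real.rpow_def_of_pos (by positivity),
    Real.log_div (by positivity) (by positivity), Real.log_pow, Real.log_pow]
  congr 1
  field_simp
  ring

section cantorOp

variable {M k : ℕ} {𝒜 : Finset ℕ}

lemma lt_pow_of_mem_discCantor (h𝒜 : 𝒜 ⊆ Finset.range M) {x : ℕ}
    (hx : x ∈ discCantor M k 𝒜) : x < M ^ k := by
  obtain ⟨a, ha, rfl⟩ := Finset.mem_image.mp hx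
  have ha' : ∀ i, a i < M := fun i => Finset.mem_range.mp (h𝒜 (Fintype.mem_piFinset.mp ha i))
  rw [sum_digits_eq_finFunctionFinEquiv a ha']
  exact Fin.is_lt _

lemma card_discCantor (h𝒜 : 𝒜 ⊆ Finset.range M) :
    (discCantor M k 𝒜).card = 𝒜.card ^ k := by
  rw [discCantor, Finset.card_image_of_injOn, Fintype.card_piFinset, Finset.prod_const,
    Finset.card_univ, Fintype.card_fin]
  intro a ha b hb hab
  have digit_lt {c : Fin k → ℕ} (hc : c ∈ Fintype.piFinset fun _ => 𝒜) (i : Fin k) : c i < M :=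
    Finset.mem_range.mp (h𝒜 (Fintype.mem_piFinset.mp hc i))
  have hdigits := finFunctionFinEquiv.injective (Fin.ext ((sum_digits_eq_finFunctionFinEquiv a
    (digit_lt ha)).symm.trans (hab.trans (sum_digits_eq_finFunctionFinEquiv b (digit_lt hb)))))
  funext i
  exact Fin.val_eq_of_eq (congrFun hdigits i)

lemma discCantor_nonempty (h𝒜 : 𝒜.Nonempty) : (discCantor M k 𝒜).Nonempty :=
  (Fintype.piFinset_nonempty.mpr fun _ => h𝒜).image _

lemma norm_cantorOp_apply_sq {l : Fin (M ^ k)} (hl : (l : ℕ) ∈ discCantor M k 𝒜)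
    (j : Fin (M ^ k)) :
    ‖cantorOp M k 𝒜 j l‖ ^ 2 = if (j : ℕ) ∈ discCantor M k 𝒜 then ((M : ℝ) ^ k)⁻¹ else 0 := by
  by_cases hj : (j : ℕ) ∈ discCantor M k 𝒜
  · rw [cantorOp, if_pos ⟨hj, hl⟩, if_pos hj, norm_dftMatrix_apply, div_pow, one_pow,
      Real.sq_sqrt (Nat.cast_nonneg _), Nat.cast_pow, one_div]
  · rw [cantorOp, if_neg (fun h => hj h.1), if_neg hj, norm_zero, sq, mul_zero]

lemma sum_norm_sq_cantorOp_col (h𝒜 : 𝒜 ⊆ Finset.range M) {l : Fin (M ^ k)}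
    (hl : (l : ℕ) ∈ discCantor M k 𝒜) :
    ∑ j, ‖cantorOp M k 𝒜 j l‖ ^ 2 = (𝒜.card : ℝ) ^ k / (M : ℝ) ^ k := by
  have hsub : discCantor M k 𝒜 ⊆ Finset.range (M ^ k) :=
    fun x hx => Finset.mem_range.mpr (lt_pow_of_mem_discCantor h𝒜 hx)
  simp_rw [norm_cantorOp_apply_sq hl]
  rw [Fin.sum_univ_eq_sum_range (fun j => if j ∈ discCantor M k 𝒜 then ((M : ℝ) ^ k)⁻¹ else 0),
    Finset.sum_ite_mem, Finset.inter_eq_right.mpr hsub, Finset.sum_const, card_discCantor h𝒜,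
    nsmul_eq_mul, Nat.cast_pow, div_eq_mul_inv]

lemma sqrt_card_pow_div_le_rNorm (h𝒜 : 𝒜 ⊆ Finset.range M) (h𝒜ne : 𝒜.Nonempty) :
    Real.sqrt ((𝒜.card : ℝ) ^ k / (M : ℝ) ^ k) ≤ rNorm M k 𝒜 := by
  obtain ⟨c, hc⟩ := discCantor_nonempty (M := M) (k := k) h𝒜ne
  rw [← sum_norm_sq_cantorOp_col h𝒜 (l := ⟨c, lt_pow_of_mem_discCantor h𝒜 hc⟩) hc]
  exact Matrix.sqrt_sum_norm_sq_le_l2_opNorm _ _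

lemma sharpExp_le_of_rpow_le_rNorm {γ : ℝ} (hM : 1 < M) (hk : 1 ≤ k) (hγ : 0 ≤ γ)
    (h : ((M : ℝ) ^ k) ^ (-γ) ≤ rNorm M k 𝒜) : sharpExp M 𝒜 ≤ γ := by
  have hMk : (1 : ℝ) < (M : ℝ) ^ k := one_lt_pow₀ (by exact_mod_cast hM) (by omega)
  refine Real.sSup_le (fun β ⟨_, hβ⟩ => ?_) hγ
  have hexp := (Real.rpow_le_rpow_left_iff hMk).mp (h.trans (hβ k hk))
  linarith

end cantorOp

/-- Remark 1.1, the best possible exponent: for a nonempty alphabet `𝒜`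
of cardinality `A`, `r_k ≥ √(A^k/M^k) = N^{-(1-δ)/2}` with `N = M^k`, `δ = log A / log M`;
consequently `β^s(M,𝒜) ≤ (1-δ)/2`. -/
theorem stmt8 (M A : ℕ) (hM : 3 ≤ M) (hA1 : 1 ≤ A) (hA2 : A ≤ M)
    (𝒜 : Finset ℕ) (h𝒜 : 𝒜 ⊆ Finset.range M) (h𝒜ne : 𝒜.Nonempty) (hcard : 𝒜.card = A)
    (k : ℕ) (hk : 1 ≤ k) :
    Real.sqrt ((A : ℝ) ^ k / (M : ℝ) ^ k) ≤ rNorm M k 𝒜 ∧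
      ((M : ℝ) ^ k) ^ (-((1 - Real.log A / Real.log M) / 2)) ≤ rNorm M k 𝒜 ∧
      sharpExp M 𝒜 ≤ (1 - Real.log A / Real.log M) / 2 := by
  subst hcard
  have hM1 : (1 : ℝ) < M := by exact_mod_cast (by omega : 1 < M)
  have hsqrt := sqrt_card_pow_div_le_rNorm (k := k) h𝒜 h𝒜ne
  have hrpow := rpow_neg_half_one_sub_log_div_log (a := 𝒜.card) (by exact_mod_cast hA1)
    (zero_lt_one.trans hM1) hM1.ne' k
  have hpow : ((M : ℝ) ^ k) ^ (-((1 - Real.log 𝒜.card / Real.log M) / 2)) ≤ rNorm M k 𝒜 :=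
    hrpow ▸ hsqrt
  have hδ : Real.log 𝒜.card / Real.log M ≤ 1 :=
    (div_le_one (Real.log_pos hM1)).mpr
      (Real.log_le_log (by exact_mod_cast hA1) (by exact_mod_cast hA2))
  exact ⟨hsqrt, hpow, sharpExp_le_of_rpow_le_rNorm (by omega) hk (by linarith) hpow⟩
end

section
/- Let M, A ∈ ℕ with M ≥ 3 and 1 < A < M, let L ≥ 1, and let 𝒜 ⊆ {0,...,M−1} with Card(𝒜) = A. Suppose that for every integer m with 1 ≤ |m| ≤ M−1 one has |∑_{l∈𝒜} e^{2πiml/M}| ≤ L·√A. Then the operator norm satisfies ‖1_𝒜 F_M 1_𝒜‖_{ℓ²_M→ℓ²_M} ≤ √(2L·A^{3/2}/M). -/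
open scoped BigOperators

/-- The matrix of the operator `1_𝒜 F_M 1_𝒜` on `ℓ²_M`. -/
noncomputable def alphOp (M : ℕ) (𝒜 : Finset ℕ) : Matrix (Fin M) (Fin M) ℂ :=
  fun j l => if (j : ℕ) ∈ 𝒜 ∧ (l : ℕ) ∈ 𝒜 then dftMatrix M j l else 0

/-!
Write `T = 1_𝒜 F_M 1_𝒜`. By the C*-identity `‖T‖² = ‖TᴴT‖`, and the Gram matrix `TᴴT` is
supported on `𝒜 × 𝒜` with entries `M⁻¹ ∑_{k ∈ 𝒜} e^{2πi(j-l)k/M}`: these equal `A/M` on the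
diagonal and are at most `L√A/M` off it by hypothesis. Bounding the operator norm of `TᴴT` by its
Hilbert–Schmidt norm gives `‖T‖⁴ ≤ A (A/M)² + A² (L√A/M)² = (1 + L²) A³/M² ≤ (2 L A^{3/2}/M)²`.
-/

open Finset Matrix

section

variable {𝕜 n : Type*} [RCLike 𝕜] [Fintype n] [DecidableEq n]

lemma norm_toEuclideanCLM_le_sqrt_sum_sq (C : Matrix n n 𝕜) :
    ‖toEuclideanCLM (𝕜 := 𝕜) C‖ ≤ √(∑ i, ∑ j, ‖C i j‖ ^ 2) := by
  refine ContinuousLinearMap.opNorm_le_bound _ (Real.sqrt_nonneg _) fun x => ?_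
  rw [← Real.sqrt_sq (norm_nonneg (toEuclideanCLM (𝕜 := 𝕜) C x)),
    ← Real.sqrt_sq (norm_nonneg x), ← Real.sqrt_mul (by positivity)]
  refine Real.sqrt_le_sqrt ?_
  rw [EuclideanSpace.norm_sq_eq, EuclideanSpace.norm_sq_eq, Finset.sum_mul]
  refine Finset.sum_le_sum fun i _ => ?_
  calc ‖∑ j, C i j * x j‖ ^ 2 ≤ (∑ j, ‖C i j‖ * ‖x j‖) ^ 2 := by
        gcongr
        exact (norm_sum_le _ _).trans_eq (by simp only [norm_mul])
    _ ≤ (∑ j, ‖C i j‖ ^ 2) * ∑ j, ‖x j‖ ^ 2 := Finset.sum_mul_sq_le_sq_mul_sq _ _ _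

open scoped Matrix.Norms.L2Operator in
lemma norm_toEuclideanCLM_sq (C : Matrix n n 𝕜) :
    ‖toEuclideanCLM (𝕜 := 𝕜) C‖ ^ 2 = ‖toEuclideanCLM (𝕜 := 𝕜) (Cᴴ * C)‖ := by
  rw [← cstar_norm_def, ← cstar_norm_def, l2_opNorm_conjTranspose_mul_self, sq]

lemma sum_sq_norm_le_of_support_subset (C : Matrix n n 𝕜) (s : Finset n) {a b : ℝ}
    (hzero : ∀ i j, ¬(i ∈ s ∧ j ∈ s) → C i j = 0) (hdiag : ∀ i ∈ s, ‖C i i‖ ≤ a)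
    (hoff : ∀ i ∈ s, ∀ j ∈ s, i ≠ j → ‖C i j‖ ≤ b) :
    ∑ i, ∑ j, ‖C i j‖ ^ 2 ≤ #s * (a ^ 2 + #s * b ^ 2) := by
  have hsupp : ∑ i, ∑ j, ‖C i j‖ ^ 2 = ∑ i ∈ s, ∑ j ∈ s, ‖C i j‖ ^ 2 := by
    rw [← Finset.sum_subset (subset_univ s) fun i _ hi => ?_]
    · refine Finset.sum_congr rfl fun i hi => ?_
      rw [← Finset.sum_subset (subset_univ s) fun j _ hj => ?_]
      simp [hzero i j (by tauto)]
    · exact Finset.sum_eq_zero fun j _ => by simp [hzero i j (by tauto)]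
  have hterm : ∀ i ∈ s, ∀ j ∈ s, ‖C i j‖ ^ 2 ≤ (if i = j then a ^ 2 else 0) + b ^ 2 := by
    intro i hi j hj
    rcases eq_or_ne i j with rfl | hij
    · have := pow_le_pow_left₀ (norm_nonneg _) (hdiag i hi) 2
      rw [if_pos rfl]
      nlinarith [sq_nonneg b]
    · simpa [hij] using pow_le_pow_left₀ (norm_nonneg _) (hoff i hi j hj hij) 2
  calc ∑ i, ∑ j, ‖C i j‖ ^ 2
      ≤ ∑ i ∈ s, ∑ j ∈ s, ((if i = j then a ^ 2 else 0) + b ^ 2) := by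
        rw [hsupp]
        exact Finset.sum_le_sum fun i hi => Finset.sum_le_sum fun j hj => hterm i hi j hj
    _ = #s * (a ^ 2 + #s * b ^ 2) := by
        simp +contextual only [Finset.sum_add_distrib, Finset.sum_ite_eq, if_true,
          Finset.sum_const, nsmul_eq_mul]
        ring

end

lemma Fin.sum_ite_val_mem {β : Type*} [AddCommMonoid β] {M : ℕ} {𝒜 : Finset ℕ}
    (h𝒜 : 𝒜 ⊆ range M) (g : ℕ → β) :
    ∑ m : Fin M, (if (m : ℕ) ∈ 𝒜 then g m else 0) = ∑ k ∈ 𝒜, g k := by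
  rw [Fin.sum_univ_eq_sum_range (fun k => if k ∈ 𝒜 then g k else 0), Finset.sum_ite_mem,
    Finset.inter_eq_right.mpr h𝒜]

lemma star_dftMatrix_mul_dftMatrix (N : ℕ) (m j l : Fin N) :
    star (dftMatrix N m j) * dftMatrix N m l =
      (N : ℂ)⁻¹ * Complex.exp (2 * Real.pi * Complex.I * (((j : ℤ) - (l : ℤ) : ℤ) : ℂ) *
        ((m : ℕ) : ℂ) / N) := by
  have hscale : star ((1 / √N : ℝ) : ℂ) * ((1 / √N : ℝ) : ℂ) = (N : ℂ)⁻¹ := by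
    rw [Complex.star_def, Complex.conj_ofReal, ← Complex.ofReal_mul, div_mul_div_comm, one_mul,
      Real.mul_self_sqrt (Nat.cast_nonneg N)]
    simp
  rw [dftMatrix, dftMatrix, star_mul', mul_mul_mul_comm, hscale, Complex.star_def,
    ← Complex.exp_conj, ← Complex.exp_add]
  congr 2
  simp only [map_div₀, map_neg, map_mul, Complex.conj_ofReal, Complex.conj_I, map_ofNat,
    map_natCast]
  push_cast
  ring

lemma alphOp_gram_apply (M : ℕ) (𝒜 : Finset ℕ) (h𝒜 : 𝒜 ⊆ range M) (j l : Fin M) :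
    ((alphOp M 𝒜)ᴴ * alphOp M 𝒜) j l =
      if (j : ℕ) ∈ 𝒜 ∧ (l : ℕ) ∈ 𝒜 then
        (M : ℂ)⁻¹ * ∑ k ∈ 𝒜, Complex.exp (2 * Real.pi * Complex.I *
          (((j : ℤ) - (l : ℤ) : ℤ) : ℂ) * (k : ℂ) / M)
      else 0 := by
  rw [Matrix.mul_apply]
  split_ifs with hjl
  · rw [Finset.mul_sum, ← Fin.sum_ite_val_mem h𝒜]
    refine Finset.sum_congr rfl fun m _ => ?_
    by_cases hm : (m : ℕ) ∈ 𝒜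
    · simp only [conjTranspose_apply, alphOp, hm, hjl, and_self, if_true]
      exact star_dftMatrix_mul_dftMatrix M m j l
    · simp [alphOp, hm]
  · refine Finset.sum_eq_zero fun m _ => ?_
    rcases not_and_or.mp hjl with h | h <;> simp [alphOp, h]

lemma norm_alphOp_gram_apply (M : ℕ) (𝒜 : Finset ℕ) (h𝒜 : 𝒜 ⊆ range M) {j l : Fin M}
    (hj : (j : ℕ) ∈ 𝒜) (hl : (l : ℕ) ∈ 𝒜) :
    ‖((alphOp M 𝒜)ᴴ * alphOp M 𝒜) j l‖ =
      ‖∑ k ∈ 𝒜, Complex.exp (2 * Real.pi * Complex.I *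
          (((j : ℤ) - (l : ℤ) : ℤ) : ℂ) * (k : ℂ) / M)‖ / M := by
  rw [alphOp_gram_apply M 𝒜 h𝒜, if_pos ⟨hj, hl⟩, norm_mul, norm_inv, Complex.norm_natCast,
    inv_mul_eq_div]

lemma norm_alphOp_gram_apply_self (M : ℕ) (𝒜 : Finset ℕ) (h𝒜 : 𝒜 ⊆ range M) {j : Fin M}
    (hj : (j : ℕ) ∈ 𝒜) :
    ‖((alphOp M 𝒜)ᴴ * alphOp M 𝒜) j j‖ = #𝒜 / M := by
  simp [norm_alphOp_gram_apply M 𝒜 h𝒜 hj hj]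

lemma Fin.one_le_abs_sub_and_abs_sub_le {M : ℕ} {j l : Fin M} (h : j ≠ l) :
    1 ≤ |(j : ℤ) - l| ∧ |(j : ℤ) - l| ≤ M - 1 := by
  have hjl : (j : ℤ) ≠ l := by exact_mod_cast Fin.val_ne_of_ne h
  have := j.isLt
  have := l.isLt
  exact ⟨Int.one_le_abs (sub_ne_zero.mpr hjl), by rw [abs_le]; omega⟩

lemma mul_sq_add_mul_sq_le_sq (A M L : ℝ) (hA : 0 ≤ A) (hL : 1 ≤ L) :
    A * ((A / M) ^ 2 + A * (L * √A / M) ^ 2) ≤ (2 * L * A ^ (3 / 2 : ℝ) / M) ^ 2 := by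
  have hA3 : (A ^ (3 / 2 : ℝ)) ^ 2 = A ^ 3 := by
    rw [← Real.rpow_natCast, ← Real.rpow_mul hA]
    norm_num
  calc A * ((A / M) ^ 2 + A * (L * √A / M) ^ 2) = (1 + L ^ 2) * (A ^ 3 / M ^ 2) := by
        rw [div_pow, div_pow, mul_pow, Real.sq_sqrt hA]; ring
    _ ≤ 4 * L ^ 2 * (A ^ 3 / M ^ 2) := by gcongr; nlinarith
    _ = (2 * L * A ^ (3 / 2 : ℝ) / M) ^ 2 := by rw [div_pow, mul_pow, hA3]; ring

theorem stmt15_general (M A : ℕ)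
    (L : ℝ) (hL : 1 ≤ L)
    (𝒜 : Finset ℕ) (h𝒜 : 𝒜 ⊆ Finset.range M) (hcard : 𝒜.card = A)
    (hsum : ∀ m : ℤ, 1 ≤ |m| → |m| ≤ (M : ℤ) - 1 →
      ‖∑ l ∈ 𝒜, Complex.exp (2 * Real.pi * Complex.I * m * l / M)‖ ≤
        L * Real.sqrt A) :
    ‖Matrix.toEuclideanCLM (𝕜 := ℂ) (alphOp M 𝒜)‖ ≤
      Real.sqrt (2 * L * (A : ℝ) ^ ((3 : ℝ) / 2) / M) := by
  have h𝒜M : ∀ k ∈ 𝒜, k < M := fun k hk => mem_range.mp (h𝒜 hk)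
  have hgram := sum_sq_norm_le_of_support_subset ((alphOp M 𝒜)ᴴ * alphOp M 𝒜)
    (𝒜.attachFin h𝒜M) (a := A / M) (b := L * √A / M)
    (fun j l hjl => by
      rw [alphOp_gram_apply M 𝒜 h𝒜, if_neg (by simpa only [mem_attachFin] using hjl)])
    (fun j hj => (norm_alphOp_gram_apply_self M 𝒜 h𝒜 ((mem_attachFin h𝒜M).mp hj)).trans_le
      (by rw [hcard]))
    (fun j hj l hl hjl => by
      rw [norm_alphOp_gram_apply M 𝒜 h𝒜 ((mem_attachFin h𝒜M).mp hj)
        ((mem_attachFin h𝒜M).mp hl)]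
      obtain ⟨h1, h2⟩ := Fin.one_le_abs_sub_and_abs_sub_le hjl
      gcongr
      exact hsum _ h1 h2)
  rw [card_attachFin, hcard] at hgram
  rw [Real.le_sqrt (norm_nonneg _) (by positivity), norm_toEuclideanCLM_sq]
  calc _ ≤ _ := norm_toEuclideanCLM_le_sqrt_sum_sq _
    _ ≤ √((2 * L * (A : ℝ) ^ ((3 : ℝ) / 2) / M) ^ 2) :=
      Real.sqrt_le_sqrt (hgram.trans (mul_sq_add_mul_sq_le_sq A M L A.cast_nonneg hL))
    _ = _ := Real.sqrt_sq (by positivity)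

/-- Schur-test bound used in the proof of Theorem 1.2: if every
exponential sum `∑_{l ∈ 𝒜} e^{2πiml/M}`, `1 ≤ |m| ≤ M-1`, is at most `L √A`, then
`‖1_𝒜 F_M 1_𝒜‖_{ℓ²_M → ℓ²_M} ≤ √(2 L A^{3/2} / M)`. -/
theorem stmt15 (M A : ℕ) (hM : 3 ≤ M) (hA1 : 1 < A) (hA2 : A < M)
    (L : ℝ) (hL : 1 ≤ L)
    (𝒜 : Finset ℕ) (h𝒜 : 𝒜 ⊆ Finset.range M) (hcard : 𝒜.card = A)
    (hsum : ∀ m : ℤ, 1 ≤ |m| → |m| ≤ (M : ℤ) - 1 →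
      ‖∑ l ∈ 𝒜, Complex.exp (2 * Real.pi * Complex.I * m * l / M)‖ ≤
        L * Real.sqrt A) :
    ‖Matrix.toEuclideanCLM (𝕜 := ℂ) (alphOp M 𝒜)‖ ≤
      Real.sqrt (2 * L * (A : ℝ) ^ ((3 : ℝ) / 2) / M) :=
  stmt15_general M A L hL 𝒜 h𝒜 hcard hsum
end
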